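/- arXiv:2510.13659 — 4 statements merged into one kernel-verified Lean document; each statement's English description precedes it below -/
import Mathlib

section
/- Let (X,d,μ,E_p,F_p,Γ_p) be a regular local p-Dirichlet space. For every Lipschitz function g : ℝ → ℝ with g(0)=0 and every f ∈ F_p which admits a continuous representative, one has g∘f ∈ F_p and Γ_p⟨g∘f⟩ ≤ (Lip_a[g]∘f)^p · Γ_p⟨f⟩, i.e. Γ_p⟨g∘f⟩(A) ≤ ∫_A (Lip_a[g](f(x)))^p dΓ_p⟨f⟩(x) for all Borel A ⊆ X. -/
open MeasureTheory ENNReal NNReal Filter Topology Metric Set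

noncomputable section

/-- The norm `(‖f‖_{L^p}^p + E_p(f))^{1/p}` on a `p`-Dirichlet space. -/
def fpNorm {X : Type} [MeasurableSpace X] (μ : Measure X) (p : ℝ)
    (Ep : (X → ℝ) → ℝ) (f : X → ℝ) : ℝ :=
  ((∫ x, |f x| ^ p ∂μ) + Ep f) ^ (1 / p)

/-- A local `p`-Dirichlet space `(X, d, μ, E_p, F_p, Γ_p)`. -/
structure LocalPDirichletSpace (X : Type) [MetricSpace X] [MeasurableSpace X] [BorelSpace X]
    (μ : Measure X) (p : ℝ) : Type where
  /-- `1 < p < ∞`. -/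
  hp : 1 < p
  /-- The underlying metric space is locally compact. -/
  locallyCompact : LocallyCompactSpace X
  /-- `μ` is a Radon measure. -/
  radon : μ.Regular
  /-- The domain `F_p ⊆ L^p(X,μ)`. -/
  F : Set (X → ℝ)
  /-- The energy functional `E_p`. -/
  Ep : (X → ℝ) → ℝ
  /-- The energy measures `Γ_p⟨f⟩`. -/
  Γ : (X → ℝ) → Measure X
  memLp : ∀ f ∈ F, MemLp f (ENNReal.ofReal p) μ
  Ep_nonneg : ∀ f ∈ F, 0 ≤ Ep f
  zero_mem : (0 : X → ℝ) ∈ F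
  add_mem : ∀ f ∈ F, ∀ g ∈ F, f + g ∈ F
  smul_mem : ∀ (c : ℝ), ∀ f ∈ F, c • f ∈ F
  /-- Completeness: `F_p` is a Banach space under the norm `fpNorm`. -/
  complete : ∀ fi : ℕ → X → ℝ, (∀ i, fi i ∈ F) →
    (∀ ε > (0 : ℝ), ∃ N, ∀ m ≥ N, ∀ k ≥ N, fpNorm μ p Ep (fi m - fi k) < ε) →
    ∃ f ∈ F, Tendsto (fun i => fpNorm μ p Ep (fi i - f)) atTop (𝓝 0)
  /-- The total mass of the energy measure is the energy. -/
  mass : ∀ f ∈ F, Γ f Set.univ = ENNReal.ofReal (Ep f)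
  /-- Homogeneity. -/
  homog : ∀ f ∈ F, ∀ c : ℝ, Γ (c • f) = ENNReal.ofReal (|c| ^ p) • Γ f
  /-- Sublinearity. -/
  sublinear : ∀ f ∈ F, ∀ g ∈ F, ∀ A : Set X, MeasurableSet A →
    Γ (f + g) A ^ (1 / p) ≤ Γ f A ^ (1 / p) + Γ g A ^ (1 / p)
  /-- Chain rule. -/
  chain : ∀ f ∈ F, ∀ (g : ℝ → ℝ) (L : ℝ≥0), LipschitzWith L g → g 0 = 0 →
    g ∘ f ∈ F ∧ ∀ A : Set X, MeasurableSet A →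
      Γ (g ∘ f) A ≤ ENNReal.ofReal ((L : ℝ) ^ p) * Γ f A
  /-- Locality. -/
  locality : ∀ f ∈ F, ∀ (c : ℝ) (A : Set X), IsOpen A →
    (∀ᵐ x ∂(μ.restrict A), f x = c) → Γ f A = 0
  /-- Weak lower semicontinuity of the energy measures. -/
  lsc : ∀ (f : X → ℝ) (fi : ℕ → X → ℝ), MemLp f (ENNReal.ofReal p) μ →
    (∀ i, fi i ∈ F) →
    Tendsto (fun i => eLpNorm (fi i - f) (ENNReal.ofReal p) μ) atTop (𝓝 0) →
    (∃ C : ℝ, ∀ i, Ep (fi i) ≤ C) →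
    f ∈ F ∧ ∀ A : Set X, MeasurableSet A →
      Γ f A ≤ liminf (fun i => Γ (fi i) A) atTop

variable {X : Type} [MetricSpace X] [MeasurableSpace X] [BorelSpace X] {μ : Measure X} {p : ℝ}

/-- A regular `p`-Dirichlet space: `C₀(X) ∩ F_p` is dense in `F_p` and uniformly dense
in the space `C₀(X)` of continuous compactly supported functions. -/
def LocalPDirichletSpace.IsRegular (D : LocalPDirichletSpace X μ p) : Prop :=
  (∀ f ∈ D.F, ∀ ε > (0 : ℝ), ∃ g ∈ D.F, Continuous g ∧ HasCompactSupport g ∧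
      fpNorm μ p D.Ep (f - g) < ε) ∧
  (∀ f : X → ℝ, Continuous f → HasCompactSupport f → ∀ ε > (0 : ℝ),
      ∃ g ∈ D.F, Continuous g ∧ HasCompactSupport g ∧ ∀ x, |f x - g x| < ε)

/-- The capacity associated to a `p`-Dirichlet space. -/
def LocalPDirichletSpace.cap (D : LocalPDirichletSpace X μ p) (A : Set X) : ℝ≥0∞ :=
  ⨅ (f : X → ℝ) (_ : f ∈ D.F ∧ ∃ U : Set X, IsOpen U ∧ A ⊆ U ∧
      ∀ᵐ x ∂(μ.restrict U), f x = 1),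
    ENNReal.ofReal ((∫ x, |f x| ^ p ∂μ) + D.Ep f)

/-- Quasicontinuity with respect to the capacity of a `p`-Dirichlet space. -/
def LocalPDirichletSpace.QuasiContinuous (D : LocalPDirichletSpace X μ p) (f : X → ℝ) : Prop :=
  ∀ ε : ℝ≥0∞, 0 < ε → ∃ O : Set X, IsOpen O ∧ D.cap O < ε ∧ ContinuousOn f Oᶜ

/-- The measure `Λ_φ = ∑ Γ_p⟨φ i⟩`. -/
def LocalPDirichletSpace.Lam (D : LocalPDirichletSpace X μ p) {n : ℕ}
    (φ : Fin n → X → ℝ) : Measure X :=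
  ∑ i, D.Γ (φ i)

/-- `p`-independence of `φ = (φ₁, …, φₙ)` on a set `A`. -/
def LocalPDirichletSpace.PIndependentOn (D : LocalPDirichletSpace X μ p) {n : ℕ}
    (φ : Fin n → X → ℝ) (A : Set X) : Prop :=
  ∃ S : Set (EuclideanSpace ℝ (Fin n)), S.Countable ∧
    S ⊆ Metric.sphere (0 : EuclideanSpace ℝ (Fin n)) 1 ∧
    Metric.sphere (0 : EuclideanSpace ℝ (Fin n)) 1 ⊆ closure S ∧
    ∀ᵐ x ∂((D.Lam φ).restrict A),
      0 < ⨅ l ∈ S, (D.Γ (fun y => ∑ i, l i * φ i y)).rnDeriv (D.Lam φ) x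


/-- The Lipschitz constant of `f` restricted to a set `s` (valued in `ℝ≥0∞`). -/
noncomputable def lipConstOn {E : Type*} [PseudoMetricSpace E] (f : E → ℝ) (s : Set E) : ℝ≥0∞ :=
  ⨆ (x : E) (_ : x ∈ s) (y : E) (_ : y ∈ s), edist (f x) (f y) / edist x y

/-- The asymptotic Lipschitz constant `Lip_a[f](x) = lim_{r→0} LIP[f|_{B(x,r)}]`. -/
noncomputable def asympLipConst {E : Type*} [PseudoMetricSpace E] (f : E → ℝ) (x : E) : ℝ≥0∞ :=
  ⨅ (r : {r : ℝ // 0 < r}), lipConstOn f (Metric.ball x (r : ℝ))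

/-!
On a band `{kδ ≤ f < (k+1)δ}` the function `f` only sees `g` on a short interval `I`. By McShane's
extension, `g|_I` extends to a function whose global Lipschitz constant is `LIP[g|_I]`; its
difference with `g` is constant on the open set `f⁻¹(int I)`, so locality and sublinearity let the
plain chain rule for the extension bound `Γ_p⟨g ∘ f⟩` on the band. Summing over the bands gives
`Γ_p⟨g ∘ f⟩(A) ≤ ∫_A LIP[g|_{B(f x, r)}]^p dΓ_p⟨f⟩` for every `r > 0`, and monotone convergence
as `r → 0` turns the integrand into `Lip_a[g](f x)^p`.
-/

section LipConstOn

variable {E : Type*}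

theorem lipConstOn_mono [PseudoMetricSpace E] {f : E → ℝ} {s t : Set E} (h : s ⊆ t) :
    lipConstOn f s ≤ lipConstOn f t :=
  iSup₂_le fun x hx => iSup₂_le fun y hy =>
    le_iSup₂_of_le x (h hx) (le_iSup₂_of_le y (h hy) le_rfl)

theorem LipschitzWith.lipConstOn_le [PseudoMetricSpace E] {f : E → ℝ} {K : ℝ≥0}
    (hf : LipschitzWith K f) (s : Set E) : lipConstOn f s ≤ K :=
  iSup₂_le fun x _ => iSup₂_le fun y _ => ENNReal.div_le_of_le_mul (hf.edist_le_mul x y)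

theorem edist_le_lipConstOn_mul [MetricSpace E] {f : E → ℝ} {s : Set E} {x y : E}
    (hx : x ∈ s) (hy : y ∈ s) : edist (f x) (f y) ≤ lipConstOn f s * edist x y := by
  rcases eq_or_ne x y with rfl | hxy
  · simp
  · exact (ENNReal.div_le_iff_le_mul (Or.inl (edist_pos.mpr hxy).ne')
      (Or.inl (edist_ne_top x y))).mp (le_iSup₂_of_le x hx (le_iSup₂_of_le y hy le_rfl))

theorem lipschitzOnWith_lipConstOn [MetricSpace E] {f : E → ℝ} {s : Set E}
    (h : lipConstOn f s ≠ ∞) : LipschitzOnWith (lipConstOn f s).toNNReal f s := fun x hx y hy => by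
  rw [ENNReal.coe_toNNReal h]
  exact edist_le_lipConstOn_mul hx hy

theorem lowerSemicontinuous_lipConstOn_ball [PseudoMetricSpace E] (f : E → ℝ) (r : ℝ) :
    LowerSemicontinuous fun x => lipConstOn f (ball x r) := by
  intro x c hc
  obtain ⟨y, hy, hc⟩ := lt_biSup_iff.mp hc
  obtain ⟨z, hz, hc⟩ := lt_biSup_iff.mp hc
  filter_upwards [isOpen_ball.mem_nhds (mem_ball_comm.mp hy),
    isOpen_ball.mem_nhds (mem_ball_comm.mp hz)] with x' hy' hz'
  exact hc.trans_le (le_iSup₂_of_le y (mem_ball_comm.mp hy')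
    (le_iSup₂_of_le z (mem_ball_comm.mp hz') le_rfl))

theorem asympLipConst_eq_iInf_nat [PseudoMetricSpace E] (f : E → ℝ) (x : E) :
    asympLipConst f x = ⨅ n : ℕ, lipConstOn f (ball x (1 / (n + 1))) := by
  refine le_antisymm (le_iInf fun n => iInf_le_of_le ⟨1 / (n + 1), by positivity⟩ le_rfl)
    (le_iInf fun ⟨r, hr⟩ => ?_)
  obtain ⟨n, hn⟩ := exists_nat_one_div_lt hr
  exact iInf_le_of_le n (lipConstOn_mono (ball_subset_ball hn.le))

end LipConstOn

namespace LocalPDirichletSpace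

theorem exponent_pos (D : LocalPDirichletSpace X μ p) : 0 < p :=
  one_pos.trans D.hp

variable (D : LocalPDirichletSpace X μ p)

theorem isFiniteMeasure_Γ {f : X → ℝ} (hf : f ∈ D.F) : IsFiniteMeasure (D.Γ f) :=
  ⟨by rw [D.mass f hf]; exact ENNReal.ofReal_lt_top⟩

theorem Γ_add_le_of_Γ_eq_zero {u w : X → ℝ} (hu : u ∈ D.F) (hw : w ∈ D.F) {B : Set X}
    (hB : MeasurableSet B) (hw0 : D.Γ w B = 0) : D.Γ (u + w) B ≤ D.Γ u B := by
  have hp := D.exponent_pos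
  have h := D.sublinear u hu w hw B hB
  rw [hw0, ENNReal.zero_rpow_of_pos (one_div_pos.mpr hp), add_zero] at h
  exact (ENNReal.rpow_le_rpow_iff (one_div_pos.mpr hp)).mp h

theorem Γ_comp_le_of_lipschitzOnWith {f : X → ℝ} (hf : f ∈ D.F) {g : ℝ → ℝ} {L : ℝ≥0}
    (hg : LipschitzWith L g) (hg0 : g 0 = 0) {s : Set ℝ} {K : ℝ≥0} (hgs : LipschitzOnWith K g s)
    {U : Set X} (hU : IsOpen U) (hfU : MapsTo f U s) {B : Set X} (hB : MeasurableSet B)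
    (hBU : B ⊆ U) : D.Γ (g ∘ f) B ≤ (K : ℝ≥0∞) ^ p * D.Γ f B := by
  obtain ⟨h, hh, hgh⟩ := hgs.extend_real
  set e : ℝ → ℝ := fun t => h t - h 0
  have he : LipschitzWith K e := by simpa only [add_zero] using hh.sub (LipschitzWith.const (h 0))
  obtain ⟨he_mem, he_le⟩ := D.chain f hf e K he (sub_self _)
  obtain ⟨hd_mem, -⟩ := D.chain f hf (fun t => g t - e t) (L + K) (hg.sub he)
    (by simp [e, hg0])
  have hd_const : ∀ x ∈ U, g (f x) - e (f x) = h 0 := fun x hx => by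
    simp only [e, hgh (hfU hx)]
    ring
  have hd_zero : D.Γ ((fun t => g t - e t) ∘ f) U = 0 :=
    D.locality _ hd_mem (h 0) U hU (ae_restrict_of_forall_mem hU.measurableSet hd_const)
  have hsplit : g ∘ f = e ∘ f + (fun t => g t - e t) ∘ f := by
    funext x
    simp
  calc D.Γ (g ∘ f) B ≤ D.Γ (e ∘ f) B := by
        rw [hsplit]
        exact D.Γ_add_le_of_Γ_eq_zero he_mem hd_mem hB (measure_mono_null hBU hd_zero)
    _ ≤ (K : ℝ≥0∞) ^ p * D.Γ f B := by
        rw [← ENNReal.coe_rpow_of_nonneg _ D.exponent_pos.le, ← ENNReal.ofReal_coe_nnreal,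
          NNReal.coe_rpow]
        exact he_le B hB

theorem Γ_comp_le_setLIntegral_lipConstOn_ball {f : X → ℝ} (hf : f ∈ D.F) (hfc : Continuous f)
    {g : ℝ → ℝ} {L : ℝ≥0} (hg : LipschitzWith L g) (hg0 : g 0 = 0) {r : ℝ} (hr : 0 < r)
    {A : Set X} (hA : MeasurableSet A) :
    D.Γ (g ∘ f) A ≤ ∫⁻ x in A, lipConstOn g (ball (f x) r) ^ p ∂D.Γ f := by
  obtain ⟨δ, hδ, hδr⟩ : ∃ δ, 0 < δ ∧ 2 * δ < r := ⟨r / 3, by positivity, by linarith⟩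
  set B : ℤ → Set X := fun k => A ∩ f ⁻¹' Ico (k • δ) ((k + 1) • δ)
  have hB : ∀ k, MeasurableSet (B k) := fun k => hA.inter (hfc.measurable measurableSet_Ico)
  have hB_disj : Pairwise (Function.onFun Disjoint B) := by
    have hIco := Set.pairwise_disjoint_Ico_add_zsmul (0 : ℝ) δ
    simp only [zero_add] at hIco
    exact fun k l hkl => ((hIco hkl).preimage f).mono inter_subset_right inter_subset_right
  have hA_eq : A = ⋃ k, B k := by
    simp only [B, ← inter_iUnion, ← preimage_iUnion, iUnion_Ico_zsmul hδ, preimage_univ,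
      inter_univ]
  have hcell : ∀ k : ℤ,
      D.Γ (g ∘ f) (B k) ≤ ∫⁻ x in B k, lipConstOn g (ball (f x) r) ^ p ∂D.Γ f := by
    intro k
    set I := Icc (k • δ - δ) ((k + 1) • δ)
    have hI : lipConstOn g I ≠ ∞ := ne_top_of_le_ne_top ENNReal.coe_ne_top (hg.lipConstOn_le I)
    have hBI : B k ⊆ f ⁻¹' Ioo (k • δ - δ) ((k + 1) • δ) := fun x hx =>
      ⟨by linarith [hx.2.1], hx.2.2⟩
    have hI_ball : ∀ x ∈ B k, I ⊆ ball (f x) r := fun x ⟨_, hx1, hx2⟩ t ⟨ht1, ht2⟩ => by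
      rw [add_smul, one_smul] at hx2 ht2
      rw [mem_ball, Real.dist_eq, abs_sub_lt_iff]
      constructor <;> linarith
    calc D.Γ (g ∘ f) (B k) ≤ lipConstOn g I ^ p * D.Γ f (B k) := by
          simpa only [ENNReal.coe_toNNReal hI] using D.Γ_comp_le_of_lipschitzOnWith hf hg hg0
            (lipschitzOnWith_lipConstOn hI) (isOpen_Ioo.preimage hfc)
            (fun x hx => Ioo_subset_Icc_self hx) (hB k) hBI
      _ = ∫⁻ _ in B k, lipConstOn g I ^ p ∂D.Γ f := (setLIntegral_const _ _).symm
      _ ≤ ∫⁻ x in B k, lipConstOn g (ball (f x) r) ^ p ∂D.Γ f :=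
          setLIntegral_mono' (hB k) fun x hx =>
            ENNReal.rpow_le_rpow (lipConstOn_mono (hI_ball x hx)) D.exponent_pos.le
  calc D.Γ (g ∘ f) A = ∑' k, D.Γ (g ∘ f) (B k) := by
        rw [← measure_iUnion hB_disj hB, ← hA_eq]
    _ ≤ ∑' k, ∫⁻ x in B k, lipConstOn g (ball (f x) r) ^ p ∂D.Γ f := ENNReal.tsum_le_tsum hcell
    _ = ∫⁻ x in A, lipConstOn g (ball (f x) r) ^ p ∂D.Γ f := by
        rw [← lintegral_iUnion hB hB_disj, ← hA_eq]

end LocalPDirichletSpace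

theorem chain_rule_asympLipConst_general
    {X : Type} [MetricSpace X] [MeasurableSpace X] [BorelSpace X] {μ : Measure X} {p : ℝ}
    (D : LocalPDirichletSpace X μ p)
    (g : ℝ → ℝ) (L : ℝ≥0) (hg : LipschitzWith L g) (hg0 : g 0 = 0)
    (f : X → ℝ) (hf : f ∈ D.F) (hfc : Continuous f) :
    g ∘ f ∈ D.F ∧ ∀ A : Set X, MeasurableSet A →
      D.Γ (g ∘ f) A ≤ ∫⁻ x in A, asympLipConst g (f x) ^ p ∂(D.Γ f) := by
  refine ⟨(D.chain f hf g L hg hg0).1, fun A hA => ?_⟩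
  have hp := D.exponent_pos
  have hΓf_fin := D.isFiniteMeasure_Γ hf
  set G : ℕ → X → ℝ≥0∞ := fun n x => lipConstOn g (ball (f x) (1 / (n + 1))) ^ p
  have hG_meas : ∀ n, Measurable (G n) := fun n =>
    ((lowerSemicontinuous_lipConstOn_ball g _).measurable.comp hfc.measurable).pow_const p
  have hG_anti : Antitone G := fun m n hmn x =>
    ENNReal.rpow_le_rpow (lipConstOn_mono (ball_subset_ball (by gcongr))) hp.le
  have hG_fin : ∫⁻ x in A, G 0 x ∂D.Γ f ≠ ∞ := by
    refine ne_top_of_le_ne_top (by finiteness : (L : ℝ≥0∞) ^ p * D.Γ f A ≠ ∞) ?_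
    rw [← setLIntegral_const]
    exact setLIntegral_mono' hA fun x _ => ENNReal.rpow_le_rpow (hg.lipConstOn_le _) hp.le
  have hG_iInf : ∀ x, ⨅ n, G n x = asympLipConst g (f x) ^ p := fun x => by
    rw [asympLipConst_eq_iInf_nat, (ENNReal.monotone_rpow_of_nonneg hp.le).map_iInf_of_continuousAt
      ENNReal.continuous_rpow_const.continuousAt (ENNReal.top_rpow_of_pos hp)]
    rfl
  calc D.Γ (g ∘ f) A ≤ ⨅ n, ∫⁻ x in A, G n x ∂D.Γ f := le_iInf fun n =>
        D.Γ_comp_le_setLIntegral_lipConstOn_ball hf hfc hg hg0 (by positivity) hA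
    _ = ∫⁻ x in A, asympLipConst g (f x) ^ p ∂D.Γ f := by
        simp_rw [← lintegral_iInf hG_meas hG_anti hG_fin, hG_iInf]

/-- **Chain rule with the asymptotic Lipschitz constant** (Lemma 2.13): in a regular local
`p`-Dirichlet space, for every Lipschitz `g : ℝ → ℝ` with `g(0) = 0` and every `f ∈ F_p`
admitting a continuous representative, `g ∘ f ∈ F_p` and
`Γ_p⟨g ∘ f⟩(A) ≤ ∫_A (Lip_a[g](f x))^p dΓ_p⟨f⟩(x)` for all Borel `A`. -/
theorem chain_rule_asympLipConst
    {X : Type} [MetricSpace X] [MeasurableSpace X] [BorelSpace X] {μ : Measure X} {p : ℝ}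
    (D : LocalPDirichletSpace X μ p) (hreg : D.IsRegular)
    (g : ℝ → ℝ) (L : ℝ≥0) (hg : LipschitzWith L g) (hg0 : g 0 = 0)
    (f : X → ℝ) (hf : f ∈ D.F) (hfc : Continuous f) :
    g ∘ f ∈ D.F ∧ ∀ A : Set X, MeasurableSet A →
      D.Γ (g ∘ f) A ≤ ∫⁻ x in A, asympLipConst g (f x) ^ p ∂(D.Γ f) :=
  chain_rule_asympLipConst_general D g L hg hg0 f hf hfc

end
end

section
/- Let (X,d,μ,E_p,F_p,Γ_p) be a local p-Dirichlet space. For every f ∈ F_p which admits a continuous representative, every constant c ∈ ℝ, and every Borel set A ⊆ X, if f(x) = c for all x ∈ A, then Γ_p⟨f⟩(A) = 0. -/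
open MeasureTheory ENNReal NNReal Filter Topology Metric Set

noncomputable section

variable {X : Type} [MetricSpace X] [MeasurableSpace X] [BorelSpace X] {μ : Measure X} {p : ℝ}

/-!
Collapse the values of `f` near `c`: with `π_ε = clampAround c ε` the projection of `ℝ` onto
`[c - ε, c + ε]`, the map `g_ε(t) = flattenAround c ε t = t - π_ε(t) + π_ε(0)` is `2`-Lipschitz and
vanishes at `0`, so `g_ε ∘ f ∈ F_p` with energy at most `2^p E_p(f)`. By continuity of `f`,
`g_ε ∘ f` is constant on the open neighbourhood `f⁻¹(c - ε, c + ε)` of `A`, so locality gives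
`Γ_p⟨g_ε ∘ f⟩(A) = 0`. As `|g_ε ∘ f - f| ≤ min(|f|, 2ε)`, dominated convergence gives
`g_ε ∘ f → f` in `L^p` when `ε → 0`, and lower semicontinuity of the energy measures yields
`Γ_p⟨f⟩(A) = 0`.
-/

theorem MeasureTheory.tendsto_eLpNorm_zero_of_dominated {α E : Type*} [MeasurableSpace α]
    [NormedAddCommGroup E] {μ : Measure α} {q : ℝ≥0∞} (hq : q ≠ ∞) {F : ℕ → α → E} {g : α → ℝ}
    (hF : ∀ n, AEStronglyMeasurable (F n) μ) (hg : MemLp g q μ)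
    (hbound : ∀ n, ∀ᵐ x ∂μ, ‖F n x‖ ≤ g x)
    (hlim : ∀ᵐ x ∂μ, Tendsto (fun n => F n x) atTop (𝓝 0)) :
    Tendsto (fun n => eLpNorm (F n) q μ) atTop (𝓝 0) := by
  rcases eq_or_ne q 0 with rfl | hq0
  · simp
  have hq' : 0 < q.toReal := ENNReal.toReal_pos hq0 hq
  suffices Tendsto (fun n => ∫⁻ x, ‖F n x‖ₑ ^ q.toReal ∂μ) atTop (𝓝 0) by
    simp only [eLpNorm_eq_lintegral_rpow_enorm_toReal hq0 hq]
    simpa [ENNReal.zero_rpow_of_pos (inv_pos.2 hq')] using this.ennrpow_const q.toReal⁻¹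
  have := tendsto_lintegral_of_dominated_convergence' (fun x => ‖g x‖ₑ ^ q.toReal)
    (fun n => (hF n).enorm.pow_const _)
    (fun n => (hbound n).mono fun x hx => ENNReal.rpow_le_rpow
      (enorm_le_iff_norm_le.2 (hx.trans (Real.le_norm_self _))) hq'.le)
    (lintegral_rpow_enorm_lt_top_of_eLpNorm_lt_top hq0 hq hg.eLpNorm_lt_top).ne
    (hlim.mono fun x hx => by
      simpa [ENNReal.zero_rpow_of_pos hq'] using hx.enorm.ennrpow_const q.toReal)
  simpa using this

section Flatten

variable {c ε t : ℝ}

def clampAround (c ε t : ℝ) : ℝ :=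
  max (c - ε) (min t (c + ε))

def flattenAround (c ε t : ℝ) : ℝ :=
  t - clampAround c ε t + clampAround c ε 0

theorem lipschitzWith_clampAround : LipschitzWith 1 (clampAround c ε) :=
  (LipschitzWith.id.min_const (c + ε)).const_max (c - ε)

theorem clampAround_mem_Icc (hε : 0 ≤ ε) : clampAround c ε t ∈ Icc (c - ε) (c + ε) :=
  ⟨le_max_left _ _, max_le (by linarith) (min_le_right _ _)⟩

theorem clampAround_of_mem_Icc (ht : t ∈ Icc (c - ε) (c + ε)) : clampAround c ε t = t := by
  rw [clampAround, min_eq_left ht.2, max_eq_right ht.1]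

theorem lipschitzWith_flattenAround : LipschitzWith 2 (flattenAround c ε) := by
  have h := (LipschitzWith.id.sub (lipschitzWith_clampAround (c := c) (ε := ε))).add
    (LipschitzWith.const (clampAround c ε 0))
  rw [one_add_one_eq_two, add_zero] at h
  exact h

@[simp]
theorem flattenAround_zero : flattenAround c ε 0 = 0 := by
  simp [flattenAround]

theorem flattenAround_of_mem_Icc (ht : t ∈ Icc (c - ε) (c + ε)) :
    flattenAround c ε t = clampAround c ε 0 := by
  rw [flattenAround, clampAround_of_mem_Icc ht, sub_self, zero_add]

theorem flattenAround_sub_self :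
    flattenAround c ε t - t = clampAround c ε 0 - clampAround c ε t := by
  rw [flattenAround]; ring

theorem abs_flattenAround_sub_self_le_abs : |flattenAround c ε t - t| ≤ |t| := by
  simpa [flattenAround_sub_self, Real.dist_eq] using lipschitzWith_clampAround.dist_le_mul 0 t

theorem abs_flattenAround_sub_self_le (hε : 0 ≤ ε) : |flattenAround c ε t - t| ≤ 2 * ε := by
  obtain ⟨h₀, h₀'⟩ := clampAround_mem_Icc (c := c) (t := 0) hε
  obtain ⟨ht, ht'⟩ := clampAround_mem_Icc (c := c) (t := t) hε
  rw [flattenAround_sub_self, abs_sub_le_iff]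
  constructor <;> linarith

theorem tendsto_eLpNorm_flattenAround_comp_sub {α : Type*} [MeasurableSpace α] {μ : Measure α}
    {q : ℝ≥0∞} (hq : q ≠ ∞) {f : α → ℝ} (hf : MemLp f q μ) {ε : ℕ → ℝ} (hε₀ : ∀ n, 0 ≤ ε n)
    (hε : Tendsto ε atTop (𝓝 0)) :
    Tendsto (fun n => eLpNorm (flattenAround c (ε n) ∘ f - f) q μ) atTop (𝓝 0) := by
  refine tendsto_eLpNorm_zero_of_dominated hq (g := fun x => |f x|)
    (fun n => ?_) hf.abs (fun n => .of_forall fun x => abs_flattenAround_sub_self_le_abs)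
    (.of_forall fun x => ?_)
  · exact (lipschitzWith_flattenAround.continuous.comp_aestronglyMeasurable
      hf.aestronglyMeasurable).sub hf.aestronglyMeasurable
  · refine squeeze_zero_norm (fun n => abs_flattenAround_sub_self_le (hε₀ n)) ?_
    simpa using hε.const_mul 2

end Flatten

namespace LocalPDirichletSpace

variable (D : LocalPDirichletSpace X μ p) {f : X → ℝ} {c : ℝ} {A : Set X}

theorem Γ_eq_zero_of_subset_of_isOpen {U : Set X} (hf : f ∈ D.F) (hU : IsOpen U) (hAU : A ⊆ U)
    (hconst : ∀ x ∈ U, f x = c) : D.Γ f A = 0 :=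
  measure_mono_null hAU <|
    D.locality f hf c U hU (ae_restrict_of_forall_mem hU.measurableSet hconst)

theorem Ep_comp_le (hf : f ∈ D.F) {g : ℝ → ℝ} {L : ℝ≥0} (hg : LipschitzWith L g) (hg0 : g 0 = 0) :
    D.Ep (g ∘ f) ≤ L ^ p * D.Ep f := by
  obtain ⟨hgf, hΓ⟩ := D.chain f hf g L hg hg0
  have hL : (0 : ℝ) ≤ L ^ p * D.Ep f :=
    mul_nonneg (Real.rpow_nonneg L.2 p) (D.Ep_nonneg f hf)
  rw [← ENNReal.ofReal_le_ofReal_iff hL, ← D.mass _ hgf,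
    ENNReal.ofReal_mul (by positivity), ← D.mass f hf]
  exact hΓ univ MeasurableSet.univ

theorem Γ_eq_zero_of_tendsto {fi : ℕ → X → ℝ} (hfi : ∀ n, fi n ∈ D.F)
    (hf : MemLp f (ENNReal.ofReal p) μ)
    (hlim : Tendsto (fun n => eLpNorm (fi n - f) (ENNReal.ofReal p) μ) atTop (𝓝 0))
    (hbdd : ∃ C, ∀ n, D.Ep (fi n) ≤ C) (hA : MeasurableSet A) (hzero : ∀ n, D.Γ (fi n) A = 0) :
    D.Γ f A = 0 := by
  have := (D.lsc f fi hf hfi hlim hbdd).2 A hA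
  simpa [hzero] using this

theorem flattenAround_comp_mem (hf : f ∈ D.F) (ε : ℝ) : flattenAround c ε ∘ f ∈ D.F :=
  (D.chain f hf _ 2 lipschitzWith_flattenAround flattenAround_zero).1

theorem Γ_flattenAround_comp_eq_zero (hf : f ∈ D.F) (hfc : Continuous f) {ε : ℝ} (hε : 0 < ε)
    (hconst : ∀ x ∈ A, f x = c) : D.Γ (flattenAround c ε ∘ f) A = 0 := by
  refine D.Γ_eq_zero_of_subset_of_isOpen (D.flattenAround_comp_mem hf ε)
    (hfc.isOpen_preimage (Ioo (c - ε) (c + ε)) isOpen_Ioo) (fun x hx => ?_)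
    fun x hx => flattenAround_of_mem_Icc ?_
  · simp [hconst x hx, hε]
  · exact Ioo_subset_Icc_self hx

end LocalPDirichletSpace

/-- **Locality on Borel sets for continuous functions** (Lemma 2.14): in a local
`p`-Dirichlet space, if `f ∈ F_p` admits a continuous representative which is equal to a
constant `c` on a Borel set `A`, then `Γ_p⟨f⟩(A) = 0`. -/
theorem energy_measure_locality_of_continuous
    {X : Type} [MetricSpace X] [MeasurableSpace X] [BorelSpace X] {μ : Measure X} {p : ℝ}
    (D : LocalPDirichletSpace X μ p)
    (f : X → ℝ) (hf : f ∈ D.F) (hfc : Continuous f)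
    (c : ℝ) (A : Set X) (hA : MeasurableSet A) (hconst : ∀ x ∈ A, f x = c) :
    D.Γ f A = 0 := by
  have hε : ∀ n : ℕ, 0 < 1 / ((n : ℝ) + 1) := fun n => Nat.one_div_pos_of_nat
  refine D.Γ_eq_zero_of_tendsto (fi := fun n => flattenAround c (1 / ((n : ℝ) + 1)) ∘ f)
    (fun n => D.flattenAround_comp_mem hf _) (D.memLp f hf)
    (tendsto_eLpNorm_flattenAround_comp_sub ofReal_ne_top (D.memLp f hf) (fun n => (hε n).le)
      tendsto_one_div_add_atTop_nhds_zero_nat)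
    ⟨_, fun n => D.Ep_comp_le hf lipschitzWith_flattenAround flattenAround_zero⟩ hA
    (fun n => D.Γ_flattenAround_comp_eq_zero hf hfc (hε n) hconst)

end
end

section
/- Let C = C(v,θ) be a cone in ℝⁿ with v a unit vector and θ ∈ (0,π/2), and let K ⊆ ℝⁿ be a compact C-cone null set. Then for every Lipschitz curve γ : I → ℝⁿ on a compact interval I, one has γ'(t) ∉ C° ∪ (−C)° for Lebesgue-a.e. t ∈ γ^{-1}(K). -/
/-!
The set of `t ∈ γ⁻¹(K)` at which `γ'(t)` lies in the open cone `C°` is covered by countably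
many compact sets `E` of small diameter on which every difference quotient of `γ` lies in `C`
and has norm at least some `c > 0`. Interpolating `γ` linearly across the gaps of `E` gives a
Lipschitz curve through `γ(E)` whose derivative lies in `C` almost everywhere: in a gap it is a
difference quotient, and at a point of `E` not isolated from the right it is a limit of
difference quotients. As `K` is cone null, `H¹(γ(E)) = 0`; since `γ` expands distances on `E`
by the factor `c`, `E` is null. The opposite cone reduces to `C` by reversing time.
-/

open MeasureTheory ENNReal NNReal Filter Topology Metric Set
open scoped RealInnerProductSpace

noncomputable section

/-- The cone `C(v,θ) = {w : ⟪v,w⟫ ≥ cos(θ)‖w‖}` about the direction `v` with angle `θ`. -/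
def cone {n : ℕ} (v : EuclideanSpace ℝ (Fin n)) (θ : ℝ) : Set (EuclideanSpace ℝ (Fin n)) :=
  {w | Real.cos θ * ‖w‖ ≤ ⟪v, w⟫}

/-- A compact set `K ⊆ ℝⁿ` is `C`-cone null if every Lipschitz curve whose derivative lies in
`C` almost everywhere meets `K` in a set of `1`-dimensional Hausdorff measure zero. -/
def IsConeNull {n : ℕ} (C K : Set (EuclideanSpace ℝ (Fin n))) : Prop :=
  ∀ (a b : ℝ) (γ : ℝ → EuclideanSpace ℝ (Fin n)) (L : ℝ≥0), LipschitzWith L γ →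
    (∀ᵐ t ∂(volume.restrict (Set.Icc a b)), ∀ w, HasDerivAt γ w t → w ∈ C) →
    MeasureTheory.Measure.hausdorffMeasure 1 (γ '' Set.Icc a b ∩ K) = 0

/-- `g` is an upper gradient of `f`: for every rectifiable curve, parametrized by arclength
as a `1`-Lipschitz curve `γ` on `[0, L]`, one has `|f(γ(L)) − f(γ(0))| ≤ ∫_γ g ds`. -/
def IsUpperGradient {E : Type*} [MetricSpace E] (g : E → ℝ) (f : E → ℝ) : Prop :=
  ∀ (L : ℝ), 0 ≤ L → ∀ γ : ℝ → E, LipschitzWith 1 γ →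
    ENNReal.ofReal |f (γ L) - f (γ 0)| ≤ ∫⁻ t in Set.Icc 0 L, ENNReal.ofReal (g (γ t))

open scoped Pointwise

lemma LipschitzWith.dist_le_mul_sub_of_le {X : Type*} [PseudoMetricSpace X] {g : ℝ → X}
    {L : ℝ≥0} (hg : LipschitzWith L g) {s t : ℝ} (hst : s ≤ t) :
    dist (g s) (g t) ≤ L * (t - s) :=
  (hg.dist_le_mul s t).trans_eq
    (by rw [Real.dist_eq, abs_sub_comm, abs_of_nonneg (sub_nonneg.2 hst)])

lemma volume_eq_zero_of_hausdorffMeasure_image_eq_zero {X : Type*} [MetricSpace X]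
    [MeasurableSpace X] [BorelSpace X] {E : Set ℝ} {g : ℝ → X} {c : ℝ} (hc : 0 < c)
    (hexp : ∀ s ∈ E, ∀ t ∈ E, c * dist s t ≤ dist (g s) (g t)) (h : μH[1] (g '' E) = 0) :
    volume E = 0 := by
  have hanti : AntilipschitzWith (Real.toNNReal c⁻¹) (E.domRestrict g) :=
    AntilipschitzWith.of_le_mul_dist fun s t => by
      rw [Real.coe_toNNReal _ (inv_nonneg.2 hc.le), le_inv_mul_iff₀ hc]
      exact hexp s s.2 t t.2
  have := hanti.le_hausdorffMeasure_image zero_le_one univ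
  rwa [image_univ, range_domRestrict, h, mul_zero, nonpos_iff_eq_zero,
    ← isometry_subtype_coe.hausdorffMeasure_image (Or.inl zero_le_one), image_univ,
    Subtype.range_coe, hausdorffMeasure_real] at this

section FillGaps

variable {F : Type*} [NormedAddCommGroup F] [NormedSpace ℝ F]

lemma norm_slope (g : ℝ → F) (s t : ℝ) : ‖slope g s t‖ = dist (g s) (g t) / dist s t := by
  rw [slope_def_module, norm_smul, norm_inv, div_eq_inv_mul, dist_comm, dist_eq_norm, dist_comm,
    dist_eq_norm]

def secant (g : ℝ → F) (l r t : ℝ) : F := g l + (t - l) • slope g l r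

@[simp]
lemma secant_left (g : ℝ → F) (l r : ℝ) : secant g l r l = g l := by
  simp [secant]

lemma secant_right (g : ℝ → F) (l r : ℝ) : secant g l r r = g r := by
  simp [secant, sub_smul_slope]

lemma hasDerivAt_secant (g : ℝ → F) (l r t : ℝ) :
    HasDerivAt (secant g l r) (slope g l r) t := by
  unfold secant
  simpa only [one_smul] using
    (((hasDerivAt_id' t).sub_const l).smul_const (slope g l r)).const_add (g l)

lemma LipschitzWith.norm_slope_le {g : ℝ → F} {L : ℝ≥0} (hg : LipschitzWith L g) (l r : ℝ) :
    ‖slope g l r‖ ≤ L := by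
  rw [norm_slope]
  exact div_le_of_le_mul₀ dist_nonneg L.coe_nonneg (hg.dist_le_mul l r)

lemma lipschitzWith_secant {g : ℝ → F} {L : ℝ≥0} (hg : LipschitzWith L g) (l r : ℝ) :
    LipschitzWith L (secant g l r) :=
  LipschitzWith.of_dist_le_mul fun s t => by
    rw [dist_eq_norm, secant, secant, add_sub_add_left_eq_sub, ← sub_smul, norm_smul,
      sub_sub_sub_cancel_right, mul_comm, ← dist_eq_norm]
    exact mul_le_mul_of_nonneg_right (hg.norm_slope_le l r) dist_nonneg

def gapLeft (E : Set ℝ) (t : ℝ) : ℝ := sSup (E ∩ Iic t)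

def gapRight (E : Set ℝ) (t : ℝ) : ℝ := sInf (E ∩ Ici t)

def gapInterp (g : ℝ → F) (E : Set ℝ) (t : ℝ) : F := secant g (gapLeft E t) (gapRight E t) t

def fillGaps (g : ℝ → F) (E : Set ℝ) (t : ℝ) : F :=
  gapInterp g E (max (sInf E) (min (sSup E) t))

variable {E : Set ℝ} {g : ℝ → F} {L : ℝ≥0} {s t : ℝ}

lemma gapLeft_mem (hE : IsCompact E) (hne : E.Nonempty) (ht : sInf E ≤ t) :
    gapLeft E t ∈ E ∩ Iic t :=
  (hE.inter_right isClosed_Iic).sSup_mem ⟨sInf E, hE.sInf_mem hne, ht⟩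

lemma gapRight_mem (hE : IsCompact E) (hne : E.Nonempty) (ht : t ≤ sSup E) :
    gapRight E t ∈ E ∩ Ici t :=
  (hE.inter_right isClosed_Ici).sInf_mem ⟨sSup E, hE.sSup_mem hne, ht⟩

lemma le_gapLeft (hE : BddAbove E) {e : ℝ} (he : e ∈ E) (het : e ≤ t) : e ≤ gapLeft E t :=
  le_csSup (hE.mono inter_subset_left) ⟨he, het⟩

lemma gapRight_le (hE : BddBelow E) {e : ℝ} (he : e ∈ E) (hte : t ≤ e) : gapRight E t ≤ e :=
  csInf_le (hE.mono inter_subset_left) ⟨he, hte⟩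

lemma gapLeft_eq_self (hE : BddAbove E) (ht : t ∈ E) : gapLeft E t = t :=
  le_antisymm (csSup_le ⟨t, ht, mem_Iic.2 le_rfl⟩ fun _ h => h.2) (le_gapLeft hE ht le_rfl)

lemma notMem_of_mem_Ioo_gap (hE : IsCompact E) (hs : s ∈ Ioo (gapLeft E t) (gapRight E t)) :
    s ∉ E := fun hsE => by
  rcases le_total s t with hst | hts
  · exact (le_gapLeft hE.bddAbove hsE hst).not_gt hs.1
  · exact (gapRight_le hE.bddBelow hsE hts).not_gt hs.2

lemma gapLeft_eq_of_mem_Ioo (hE : IsCompact E) (hne : E.Nonempty) (ht : sInf E ≤ t)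
    (hs : s ∈ Ioo (gapLeft E t) (gapRight E t)) : gapLeft E s = gapLeft E t :=
  IsGreatest.csSup_eq ⟨⟨(gapLeft_mem hE hne ht).1, hs.1.le⟩, fun _ he =>
    not_lt.1 fun hlt => notMem_of_mem_Ioo_gap hE ⟨hlt, he.2.trans_lt hs.2⟩ he.1⟩

lemma gapRight_eq_of_mem_Ioo (hE : IsCompact E) (hne : E.Nonempty) (ht : t ≤ sSup E)
    (hs : s ∈ Ioo (gapLeft E t) (gapRight E t)) : gapRight E s = gapRight E t :=
  IsLeast.csInf_eq ⟨⟨(gapRight_mem hE hne ht).1, hs.2.le⟩, fun _ he =>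
    not_lt.1 fun hlt => notMem_of_mem_Ioo_gap hE ⟨hs.1.trans_le he.2, hlt⟩ he.1⟩

lemma fillGaps_eq_self (hE : IsCompact E) (ht : t ∈ E) : fillGaps g E t = g t := by
  rw [fillGaps, min_eq_right (le_csSup hE.bddAbove ht), max_eq_right (csInf_le hE.bddBelow ht),
    gapInterp, gapLeft_eq_self hE.bddAbove ht, secant_left]

lemma dist_gapInterp_le_of_le (hE : IsCompact E) (hne : E.Nonempty) (hg : LipschitzWith L g)
    {e : ℝ} (he : e ∈ E) (hse : s ≤ e) :
    dist (gapInterp g E s) (g e) ≤ L * (e - s) := by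
  obtain ⟨-, hsr⟩ := gapRight_mem hE hne (hse.trans (le_csSup hE.bddAbove he))
  have hre : gapRight E s ≤ e := gapRight_le hE.bddBelow he hse
  calc dist (gapInterp g E s) (g e)
      ≤ dist (gapInterp g E s) (g (gapRight E s)) + dist (g (gapRight E s)) (g e) :=
        dist_triangle _ _ _
    _ ≤ L * (gapRight E s - s) + L * (e - gapRight E s) := by
        gcongr
        · rw [gapInterp, ← secant_right g (gapLeft E s) (gapRight E s)]
          exact (lipschitzWith_secant hg _ _).dist_le_mul_sub_of_le hsr
        · exact hg.dist_le_mul_sub_of_le hre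
    _ = L * (e - s) := by ring

lemma dist_le_gapInterp_of_le (hE : IsCompact E) (hne : E.Nonempty) (hg : LipschitzWith L g)
    {e : ℝ} (he : e ∈ E) (het : e ≤ t) :
    dist (g e) (gapInterp g E t) ≤ L * (t - e) := by
  obtain ⟨-, hlt⟩ := gapLeft_mem hE hne ((csInf_le hE.bddBelow he).trans het)
  have hel : e ≤ gapLeft E t := le_gapLeft hE.bddAbove he het
  calc dist (g e) (gapInterp g E t)
      ≤ dist (g e) (g (gapLeft E t)) + dist (g (gapLeft E t)) (gapInterp g E t) :=
        dist_triangle _ _ _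
    _ ≤ L * (gapLeft E t - e) + L * (t - gapLeft E t) := by
        gcongr
        · exact hg.dist_le_mul_sub_of_le hel
        · rw [gapInterp, ← secant_left g (gapLeft E t) (gapRight E t)]
          exact (lipschitzWith_secant hg _ _).dist_le_mul_sub_of_le hlt
    _ = L * (t - e) := by ring

lemma lipschitzOnWith_gapInterp (hE : IsCompact E) (hne : E.Nonempty)
    (hg : LipschitzWith L g) :
    LipschitzOnWith L (gapInterp g E) (Icc (sInf E) (sSup E)) := by
  refine LipschitzOnWith.of_dist_le_mul fun s hs t ht => ?_
  wlog hst : s ≤ t generalizing s t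
  · rw [dist_comm, dist_comm s]
    exact this t ht s hs (le_of_not_ge hst)
  rw [Real.dist_eq, abs_sub_comm, abs_of_nonneg (sub_nonneg.2 hst)]
  by_cases hgap : s ∈ Ioo (gapLeft E t) (gapRight E t)
  · rw [gapInterp, gapInterp, gapLeft_eq_of_mem_Ioo hE hne ht.1 hgap,
      gapRight_eq_of_mem_Ioo hE hne ht.2 hgap]
    exact (lipschitzWith_secant hg _ _).dist_le_mul_sub_of_le hst
  obtain ⟨e, he, hse, het⟩ : ∃ e ∈ E, s ≤ e ∧ e ≤ t := by
    obtain ⟨hlE, hlt⟩ := gapLeft_mem hE hne ht.1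
    obtain ⟨hrE, htr⟩ := gapRight_mem hE hne ht.2
    rcases le_or_gt s (gapLeft E t) with hsl | hls
    · exact ⟨_, hlE, hsl, hlt⟩
    · exact ⟨_, hrE, hst.trans htr, (not_lt.1 fun h => hgap ⟨hls, h⟩).trans hst⟩
  calc dist (gapInterp g E s) (gapInterp g E t)
      ≤ dist (gapInterp g E s) (g e) + dist (g e) (gapInterp g E t) := dist_triangle _ _ _
    _ ≤ L * (e - s) + L * (t - e) :=
        add_le_add (dist_gapInterp_le_of_le hE hne hg he hse)
          (dist_le_gapInterp_of_le hE hne hg he het)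
    _ = L * (t - s) := by ring

lemma lipschitzWith_fillGaps (hE : IsCompact E) (hne : E.Nonempty)
    (hg : LipschitzWith L g) :
    LipschitzWith L (fillGaps g E) := by
  have hclamp : LipschitzWith 1 fun t : ℝ => max (sInf E) (min (sSup E) t) :=
    (LipschitzWith.id.const_min _).const_max _
  have hmaps :
      MapsTo (fun t : ℝ => max (sInf E) (min (sSup E) t)) univ (Icc (sInf E) (sSup E)) :=
    fun t _ => ⟨le_max_left _ _,
      max_le (csInf_le_csSup hne hE.bddBelow hE.bddAbove) (min_le_left _ _)⟩
  have := lipschitzOnWith_univ.1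
    ((lipschitzOnWith_gapInterp hE hne hg).comp hclamp.lipschitzOnWith hmaps)
  rwa [mul_one] at this

lemma hasDerivAt_fillGaps_of_notMem (hE : IsCompact E) (hne : E.Nonempty)
    (ht : t ∈ Icc (sInf E) (sSup E)) (htE : t ∉ E) :
    HasDerivAt (fillGaps g E) (slope g (gapLeft E t) (gapRight E t)) t := by
  obtain ⟨hlE, hlt⟩ := gapLeft_mem hE hne ht.1
  obtain ⟨hrE, htr⟩ := gapRight_mem hE hne ht.2
  have hgap : Ioo (gapLeft E t) (gapRight E t) ∈ 𝓝 t :=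
    Ioo_mem_nhds (hlt.lt_of_ne (ne_of_mem_of_not_mem hlE htE))
      (htr.lt_of_ne' (ne_of_mem_of_not_mem hrE htE))
  refine (hasDerivAt_secant g _ _ t).congr_of_eventuallyEq ?_
  filter_upwards [hgap] with s hs
  have hsI : sInf E ≤ s ∧ s ≤ sSup E :=
    ⟨(csInf_le hE.bddBelow hlE).trans hs.1.le, hs.2.le.trans (le_csSup hE.bddAbove hrE)⟩
  rw [fillGaps, min_eq_right hsI.2, max_eq_right hsI.1, gapInterp,
    gapLeft_eq_of_mem_Ioo hE hne ht.1 hs, gapRight_eq_of_mem_Ioo hE hne ht.2 hs]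

variable {C : Set F}

lemma mem_of_hasDerivAt_fillGaps (hC : IsClosed C) (hE : IsCompact E) (hne : E.Nonempty)
    (hslope : ∀ s ∈ E, ∀ t ∈ E, s < t → slope g s t ∈ C) (ht : t ∈ Icc (sInf E) (sSup E))
    (hacc : t ∉ {x ∈ E | 𝓝[E ∩ Ioi x] x = ⊥}) {w : F} (hw : HasDerivAt (fillGaps g E) w t) :
    w ∈ C := by
  by_cases htE : t ∈ E
  · have : (𝓝[E ∩ Ioi t] t).NeBot := ⟨fun h => hacc ⟨htE, h⟩⟩
    have hlim : Tendsto (slope (fillGaps g E) t) (𝓝[E ∩ Ioi t] t) (𝓝 w) :=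
      (hasDerivAt_iff_tendsto_slope.1 hw).mono_left (nhdsWithin_mono _ fun s hs => ne_of_gt hs.2)
    refine hC.mem_of_tendsto hlim (eventually_nhdsWithin_of_forall fun s hs => ?_)
    rw [slope, fillGaps_eq_self hE hs.1, fillGaps_eq_self hE htE]
    exact hslope t htE s hs.1 hs.2
  · obtain ⟨hlE, hlt⟩ := gapLeft_mem hE hne ht.1
    obtain ⟨hrE, htr⟩ := gapRight_mem hE hne ht.2
    rw [hw.unique (hasDerivAt_fillGaps_of_notMem hE hne ht htE)]
    exact hslope _ hlE _ hrE ((hlt.lt_of_ne (ne_of_mem_of_not_mem hlE htE)).trans_le htr)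

lemma ae_mem_of_hasDerivAt_fillGaps (hC : IsClosed C) (hE : IsCompact E) (hne : E.Nonempty)
    (hslope : ∀ s ∈ E, ∀ t ∈ E, s < t → slope g s t ∈ C) :
    ∀ᵐ t ∂volume.restrict (Icc (sInf E) (sSup E)), ∀ w, HasDerivAt (fillGaps g E) w t → w ∈ C := by
  rw [ae_restrict_iff' measurableSet_Icc]
  filter_upwards [countable_setOfPred_isolated_right_within.ae_notMem volume] with t hacc ht w hw
  exact mem_of_hasDerivAt_fillGaps hC hE hne hslope ht hacc hw

end FillGaps

section BackwardSlopes

variable {F : Type*} [NormedAddCommGroup F] [NormedSpace ℝ F] {γ : ℝ → F} {C : Set F}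

def backwardSlopeSet (γ : ℝ → F) (C : Set F) (c δ : ℝ) : Set ℝ :=
  {t | ∀ h ∈ Ioc 0 δ, slope γ (t - h) t ∈ C ∧ c ≤ ‖slope γ (t - h) t‖}

lemma isClosed_backwardSlopeSet (hγ : Continuous γ) (hC : IsClosed C) (c δ : ℝ) :
    IsClosed (backwardSlopeSet γ C c δ) := by
  simp only [backwardSlopeSet, ofPred_forall]
  refine isClosed_biInter fun h _ => ?_
  have hcont : Continuous fun t => slope γ (t - h) t := by
    have hslope : (fun t => slope γ (t - h) t) = fun t => h⁻¹ • (γ t - γ (t - h)) :=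
      funext fun t => by rw [slope_def_module, _root_.sub_sub_cancel]
    rw [hslope]
    fun_prop
  exact (hC.preimage hcont).inter (isClosed_le continuous_const hcont.norm)

lemma HasDerivAt.exists_mem_backwardSlopeSet {w : F} {t : ℝ} (hd : HasDerivAt γ w t)
    (hw : w ∈ interior C) (hw0 : w ≠ 0) :
    ∃ k m : ℕ, t ∈ backwardSlopeSet γ C (1 / ((k : ℝ) + 1)) (1 / ((m : ℝ) + 1)) := by
  have hlim : Tendsto (fun h => slope γ (t - h) t) (𝓝[>] 0) (𝓝 w) := by
    have hshift : Tendsto (fun h : ℝ => t - h) (𝓝[>] 0) (𝓝[≠] t) :=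
      tendsto_nhdsWithin_of_tendsto_nhds_of_eventually_within _
        (((continuous_const.sub continuous_id).tendsto' 0 t (sub_zero t)).mono_left
          nhdsWithin_le_nhds)
        (eventually_nhdsWithin_of_forall fun h (hh : 0 < h) => by simpa using hh.ne')
    exact ((hasDerivAt_iff_tendsto_slope.1 hd).comp hshift).congr fun h => slope_comm γ t (t - h)
  have hw' : 0 < ‖w‖ := norm_pos_iff.2 hw0
  have hU : interior C ∩ {z | ‖w‖ / 2 < ‖z‖} ∈ 𝓝 w :=
    inter_mem (isOpen_interior.mem_nhds hw)
      ((isOpen_lt continuous_const continuous_norm).mem_nhds (half_lt_self hw'))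
  obtain ⟨ε, hε, hsub⟩ := mem_nhdsGT_iff_exists_Ioo_subset.1 (hlim hU)
  obtain ⟨k, hk⟩ := exists_nat_one_div_lt (half_pos hw')
  obtain ⟨m, hm⟩ := exists_nat_one_div_lt (mem_Ioi.1 hε)
  refine ⟨k, m, fun h hh => ?_⟩
  obtain ⟨hC', hnorm⟩ := hsub ⟨hh.1, hh.2.trans_lt hm⟩
  exact ⟨interior_subset hC', hk.le.trans hnorm.le⟩

end BackwardSlopes

section Cone

variable {n : ℕ}

lemma isClosed_cone (v : EuclideanSpace ℝ (Fin n)) (θ : ℝ) : IsClosed (cone v θ) :=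
  isClosed_le (continuous_const.mul continuous_norm) (continuous_const.inner continuous_id)

lemma neg_cone (v : EuclideanSpace ℝ (Fin n)) (θ : ℝ) : -cone v θ = cone (-v) θ := by
  ext w
  simp [cone, inner_neg_left, inner_neg_right]

lemma zero_notMem_interior_cone {v : EuclideanSpace ℝ (Fin n)} (hv : v ≠ 0) {θ : ℝ}
    (hθ : 0 ≤ Real.cos θ) : 0 ∉ interior (cone v θ) := fun h0 => by
  have hlim : Tendsto (fun r : ℝ => -(r • v)) (𝓝[>] 0) (𝓝 0) := by
    have hcont : Continuous fun r : ℝ => -(r • v) := by fun_prop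
    simpa using (hcont.tendsto 0).mono_left nhdsWithin_le_nhds
  obtain ⟨r, hr, hr0⟩ := ((hlim.eventually_mem (mem_interior_iff_mem_nhds.1 h0)).and
    self_mem_nhdsWithin).exists
  have hmem : Real.cos θ * ‖-(r • v)‖ ≤ ⟪v, -(r • v)⟫ := hr
  rw [inner_neg_right, real_inner_smul_right, real_inner_self_eq_norm_sq] at hmem
  have hpos : 0 < r * ‖v‖ ^ 2 := mul_pos hr0 (pow_pos (norm_pos_iff.2 hv) 2)
  nlinarith [mul_nonneg hθ (norm_nonneg (-(r • v)))]

lemma IsConeNull.neg {C K : Set (EuclideanSpace ℝ (Fin n))} (hnull : IsConeNull C K) :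
    IsConeNull (-C) K := by
  intro a b γ L hγ hderiv
  have hrev : LipschitzWith L fun t => γ (-t) := by
    have := hγ.comp isometry_neg.lipschitz
    rwa [mul_one] at this
  have hae : ∀ᵐ τ ∂volume.restrict (Icc (-b) (-a)), ∀ w, HasDerivAt γ w (-τ) → w ∈ -C := by
    have := ((Measure.measurePreserving_neg volume).restrict_preimage
      measurableSet_Icc).quasiMeasurePreserving.ae hderiv
    rwa [show Neg.neg ⁻¹' Icc a b = Icc (-b) (-a) from neg_Icc a b] at this
  have himage : (fun t => γ (-t)) '' Icc (-b) (-a) = γ '' Icc a b := by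
    rw [← image_image γ Neg.neg, image_neg_Icc, neg_neg, neg_neg]
  rw [← himage]
  refine hnull (-b) (-a) _ L hrev ?_
  filter_upwards [hae] with τ hτ w hw
  have hd : HasDerivAt γ (-w) (-τ) := by
    rw [← neg_neg τ] at hw
    simpa [Function.comp_def] using hw.scomp (-τ) (hasDerivAt_neg (-τ))
  simpa using hτ (-w) hd

end Cone

section ConeNull

variable {n : ℕ} {C K : Set (EuclideanSpace ℝ (Fin n))} {E : Set ℝ}
  {g γ : ℝ → EuclideanSpace ℝ (Fin n)} {L : ℝ≥0}

lemma IsConeNull.hausdorffMeasure_image_eq_zero (hnull : IsConeNull C K) (hC : IsClosed C)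
    (hE : IsCompact E) (hg : LipschitzWith L g)
    (hslope : ∀ s ∈ E, ∀ t ∈ E, s < t → slope g s t ∈ C) (hgK : MapsTo g E K) :
    μH[1] (g '' E) = 0 := by
  rcases E.eq_empty_or_nonempty with rfl | hne
  · simp
  refine measure_mono_null ?_ (hnull _ _ _ L (lipschitzWith_fillGaps hE hne hg)
    (ae_mem_of_hasDerivAt_fillGaps hC hE hne hslope))
  rintro _ ⟨t, ht, rfl⟩
  exact ⟨⟨t, ⟨csInf_le hE.bddBelow ht, le_csSup hE.bddAbove ht⟩, fillGaps_eq_self hE ht⟩,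
    hgK ht⟩

lemma IsConeNull.volume_eq_zero (hnull : IsConeNull C K) (hC : IsClosed C) (hE : IsCompact E)
    (hg : LipschitzWith L g) {c : ℝ} (hc : 0 < c)
    (hslope : ∀ s ∈ E, ∀ t ∈ E, s < t → slope g s t ∈ C ∧ c ≤ ‖slope g s t‖)
    (hgK : MapsTo g E K) : volume E = 0 := by
  refine volume_eq_zero_of_hausdorffMeasure_image_eq_zero hc (fun s hs t ht => ?_)
    (hnull.hausdorffMeasure_image_eq_zero hC hE hg
      (fun s hs t ht hst => (hslope s hs t ht hst).1) hgK)
  wlog hst : s ≤ t generalizing s t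
  · rw [dist_comm, dist_comm (g s)]
    exact this t ht s hs (le_of_not_ge hst)
  rcases hst.eq_or_lt with rfl | hst
  · simp
  have := (hslope s hs t ht hst).2
  rwa [norm_slope, le_div_iff₀ (dist_pos.2 hst.ne)] at this

lemma IsConeNull.volume_backwardSlopeSet_inter_eq_zero (hnull : IsConeNull C K)
    (hC : IsClosed C) (hK : IsClosed K) (hγ : LipschitzWith L γ) {c δ a b : ℝ} (hc : 0 < c)
    (hab : b - a ≤ δ) : volume (backwardSlopeSet γ C c δ ∩ γ ⁻¹' K ∩ Icc a b) = 0 := by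
  refine hnull.volume_eq_zero hC (isCompact_Icc.of_isClosed_subset ?_ inter_subset_right) hγ hc
    (fun s hs t ht hst => ?_) fun t ht => ht.1.2
  · exact ((isClosed_backwardSlopeSet hγ.continuous hC c δ).inter
      (hK.preimage hγ.continuous)).inter isClosed_Icc
  · simpa using ht.1.1 (t - s) ⟨sub_pos.2 hst, by linarith [hs.2.1, ht.2.2]⟩

theorem IsConeNull.ae_notMem_interior_of_hasDerivAt (hnull : IsConeNull C K)
    (hC : IsClosed C) (h0 : 0 ∉ interior C) (hK : IsClosed K) (hγ : LipschitzWith L γ) :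
    ∀ᵐ t, γ t ∈ K → ∀ w, HasDerivAt γ w t → w ∉ interior C := by
  have hδ (m : ℕ) : (0 : ℝ) < 1 / ((m : ℝ) + 1) := Nat.one_div_pos_of_nat
  have hcover : {t | ¬(γ t ∈ K → ∀ w, HasDerivAt γ w t → w ∉ interior C)} ⊆
      ⋃ (k : ℕ) (m : ℕ) (j : ℤ),
        backwardSlopeSet γ C (1 / ((k : ℝ) + 1)) (1 / ((m : ℝ) + 1)) ∩ γ ⁻¹' K ∩
          Icc (0 + j • (1 / ((m : ℝ) + 1))) (0 + (j + 1) • (1 / ((m : ℝ) + 1))) := by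
    intro t ht
    obtain ⟨htK, w, hd, hw⟩ : γ t ∈ K ∧ ∃ w, HasDerivAt γ w t ∧ w ∈ interior C := by
      simpa using ht
    obtain ⟨k, m, hkm⟩ := hd.exists_mem_backwardSlopeSet hw (ne_of_mem_of_not_mem hw h0)
    obtain ⟨j, hj⟩ := mem_iUnion.1 ((iUnion_Icc_add_zsmul (hδ m) 0).symm ▸ mem_univ t)
    simp only [mem_iUnion]
    exact ⟨k, m, j, ⟨hkm, htK⟩, hj⟩
  rw [ae_iff]
  refine measure_mono_null hcover (measure_iUnion_null fun k => measure_iUnion_null fun m =>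
    measure_iUnion_null fun j => hnull.volume_backwardSlopeSet_inter_eq_zero hC hK hγ
      Nat.one_div_pos_of_nat ?_)
  rw [add_smul, one_smul]
  linarith

end ConeNull

/-- **Derivatives along cone null sets** (Lemma 3.3): if `K` is a compact `C(v,θ)`-cone null
set, then for every Lipschitz curve `γ`, for a.e. `t ∈ γ⁻¹(K)` the derivative `γ'(t)` lies
neither in the interior of `C(v,θ)` nor in the interior of the opposite cone `C(-v,θ)`. -/
theorem deriv_not_mem_interior_cone_of_coneNull
    {n : ℕ} (v : EuclideanSpace ℝ (Fin n)) (hv : ‖v‖ = 1)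
    (θ : ℝ) (hθ : θ ∈ Set.Ioo 0 (Real.pi / 2))
    (K : Set (EuclideanSpace ℝ (Fin n))) (hK : IsCompact K)
    (hnull : IsConeNull (cone v θ) K)
    (a b : ℝ) (γ : ℝ → EuclideanSpace ℝ (Fin n)) (L : ℝ≥0) (hγ : LipschitzWith L γ) :
    ∀ᵐ t ∂(volume.restrict (Set.Icc a b ∩ γ ⁻¹' K)), ∀ w, HasDerivAt γ w t →
      w ∉ interior (cone v θ) ∪ interior (cone (-v) θ) := by
  have hcos : 0 ≤ Real.cos θ :=
    (Real.cos_pos_of_mem_Ioo ⟨by linarith [hθ.1, Real.pi_pos], hθ.2⟩).le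
  have hv0 : v ≠ 0 := norm_ne_zero_iff.1 (hv ▸ one_ne_zero)
  have hpos := hnull.ae_notMem_interior_of_hasDerivAt (isClosed_cone v θ)
    (zero_notMem_interior_cone hv0 hcos) hK.isClosed hγ
  have hneg := (neg_cone v θ ▸ hnull.neg).ae_notMem_interior_of_hasDerivAt
    (isClosed_cone (-v) θ) (zero_notMem_interior_cone (neg_ne_zero.2 hv0) hcos) hK.isClosed hγ
  filter_upwards [ae_restrict_of_ae hpos, ae_restrict_of_ae hneg,
    ae_restrict_mem (measurableSet_Icc.inter (hK.isClosed.preimage hγ.continuous).measurableSet)]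
    with t hpos hneg ht w hw
  exact not_or.2 ⟨hpos ht.2 w hw, hneg ht.2 w hw⟩

end
end

section
/- Let f : ℝⁿ → ℝ be Lipschitz with LIP[f] > 0, and let g : ℝⁿ → (0,LIP[f]] be a strictly positive lower semicontinuous function which is an upper gradient of f and satisfies g ≡ LIP[f] on ℝⁿ∖B(0,R) for some R > 0. Let (g_i)_{i=1}^∞ be a nondecreasing sequence of continuous functions with g_i → g pointwise and g_i ≡ LIP[f] on ℝⁿ∖B(0,R) for all i. Then there exists a sequence (f_i) of LIP[f]-Lipschitz functions f_i : ℝⁿ → ℝ converging weak-* to f (i.e. pointwise with uniformly bounded Lipschitz constants) such that Lip_a[f_i](x) ≤ g_i(x) for all i ∈ ℕ and all x ∈ ℝⁿ. -/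
open MeasureTheory ENNReal NNReal Filter Topology Metric Set
open scoped RealInnerProductSpace

noncomputable section

/-!
`f_i = pathInf (gi i) f` is, at `x`, the infimum over `1`-Lipschitz curves `γ` from `x` and
times `b ≥ 0` of `f(γ b) + ∫₀ᵇ g_i(γ)`. Prepending a segment to a curve shows that `f_i` is
`L`-Lipschitz and, `g_i` being continuous, that `Lip_a[f_i] ≤ g_i`; the constant curve gives
`f_i ≤ f`, and `f_i` increases with `i`. That `g` is an upper gradient says exactly that
`f ≤ pathInf g f`. If `f_i(x) < f(x) - ε` for all `i`, near-optimal curves for `g_i` may be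
stopped inside `B(0, max R ‖x‖)` (as `g_i = L` off `B(0,R)`), so their lengths are bounded (as
the `g_i` are eventually bounded below by a positive constant). By Arzelà–Ascoli they converge
to a curve from `x` whose `g`-value is, by Fatou's lemma and monotone convergence, at most
`f(x) - ε`: a contradiction.
-/

def pathCost {X : Type*} (h : X → ℝ) (γ : ℝ → X) (b : ℝ) : ℝ≥0∞ :=
  ∫⁻ t in Icc 0 b, ENNReal.ofReal (h (γ t))

def pathValues {X : Type*} [PseudoMetricSpace X] (h f : X → ℝ) (x : X) : Set ℝ :=
  {v | ∃ b γ, 0 ≤ b ∧ LipschitzWith 1 γ ∧ γ 0 = x ∧ v = f (γ b) + (pathCost h γ b).toReal}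

/-- Only meaningful where `pathValues h f x` is bounded below (`bddBelow_pathValues`); costs are
finite for `h` bounded above, so `toReal` loses nothing. -/
def pathInf {X : Type*} [PseudoMetricSpace X] (h f : X → ℝ) (x : X) : ℝ :=
  sInf (pathValues h f x)

section PathCost

variable {X : Type*} {h : X → ℝ} {γ : ℝ → X}

@[simp]
lemma pathCost_zero (h : X → ℝ) (γ : ℝ → X) : pathCost h γ 0 = 0 := by
  simp [pathCost]

lemma pathCost_le_mul {b M : ℝ} (hM : ∀ t ∈ Icc 0 b, h (γ t) ≤ M) :
    pathCost h γ b ≤ ENNReal.ofReal M * ENNReal.ofReal b :=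
  calc pathCost h γ b ≤ ∫⁻ _ in Icc 0 b, ENNReal.ofReal M :=
        setLIntegral_mono' measurableSet_Icc fun t ht => ENNReal.ofReal_le_ofReal (hM t ht)
    _ = _ := by rw [setLIntegral_const, Real.volume_Icc, sub_zero]

lemma mul_le_pathCost {b c : ℝ} (hc : ∀ z, c ≤ h z) :
    ENNReal.ofReal c * ENNReal.ofReal b ≤ pathCost h γ b :=
  calc ENNReal.ofReal c * ENNReal.ofReal b = ∫⁻ _ in Icc 0 b, ENNReal.ofReal c := by
        rw [setLIntegral_const, Real.volume_Icc, sub_zero]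
    _ ≤ pathCost h γ b := lintegral_mono fun t => ENNReal.ofReal_le_ofReal (hc (γ t))

lemma pathCost_ne_top {b M : ℝ} (hM : ∀ z, h z ≤ M) : pathCost h γ b ≠ ∞ :=
  ne_top_of_le_ne_top (by finiteness) (pathCost_le_mul fun t _ => hM (γ t))

lemma pathCost_mono {h₁ h₂ : X → ℝ} (h₁₂ : ∀ z, h₁ z ≤ h₂ z) (b : ℝ) :
    pathCost h₁ γ b ≤ pathCost h₂ γ b :=
  lintegral_mono fun t => ENNReal.ofReal_le_ofReal (h₁₂ (γ t))

lemma pathCost_eq_add_setLIntegral_Ioc {a b : ℝ} (ha : 0 ≤ a) (hab : a ≤ b) :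
    pathCost h γ b = pathCost h γ a + ∫⁻ t in Ioc a b, ENNReal.ofReal (h (γ t)) := by
  rw [pathCost, pathCost, ← lintegral_union measurableSet_Ioc
    ((Iic_disjoint_Ioc le_rfl).mono_left Icc_subset_Iic_self), Icc_union_Ioc_eq_Icc ha hab]

end PathCost

section PathInf

variable {E : Type*} [NormedAddCommGroup E] {L : ℝ≥0} {R : ℝ} {f h : E → ℝ}

lemma self_mem_pathValues (h f : E → ℝ) (x : E) : f x ∈ pathValues h f x :=
  ⟨0, fun _ => x, le_rfl, LipschitzWith.const' x, rfl, by simp⟩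

/-- A curve may be stopped at its last visit to `closedBall 0 R`: beyond it the density is `L`,
so the remaining cost pays for any decrease of the `L`-Lipschitz function `f`. -/
lemma exists_exit_time (hLf : LipschitzWith L f) (hL : ∀ z, h z ≤ L)
    (hhR : ∀ z ∉ ball (0 : E) R, h z = L) {γ : ℝ → E} (hγ : LipschitzWith 1 γ) {b : ℝ}
    (hb : 0 ≤ b) :
    ∃ b', 0 ≤ b' ∧ ‖γ b'‖ ≤ max R ‖γ 0‖ ∧
      f (γ b') + (pathCost h γ b').toReal ≤ f (γ b) + (pathCost h γ b).toReal := by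
  set S := insert 0 (Icc 0 b ∩ γ ⁻¹' closedBall 0 R)
  have hS : IsClosed S := by
    simpa only [S, insert_eq] using
      isClosed_singleton.union (isClosed_Icc.inter (isClosed_closedBall.preimage hγ.continuous))
  have hSb : ∀ t ∈ S, t ≤ b := by rintro t (rfl | ⟨ht, -⟩); exacts [hb, ht.2]
  have h0S : (0 : ℝ) ∈ S := mem_insert _ _
  set b₀ := sSup S
  have hb₀S : b₀ ∈ S := hS.csSup_mem ⟨0, h0S⟩ ⟨b, hSb⟩
  have hb₀ : 0 ≤ b₀ := le_csSup ⟨b, hSb⟩ h0S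
  have hb₀b : b₀ ≤ b := csSup_le ⟨0, h0S⟩ hSb
  have htail : EqOn (fun t => ENNReal.ofReal (h (γ t))) (fun _ => ENNReal.ofReal L) (Ioc b₀ b) :=
    fun t ht => congrArg ENNReal.ofReal <| hhR _ fun hball => (le_csSup ⟨b, hSb⟩
      (mem_insert_of_mem _ ⟨⟨hb₀.trans ht.1.le, ht.2⟩, ball_subset_closedBall hball⟩)).not_gt ht.1
  have hcost : (pathCost h γ b).toReal = (pathCost h γ b₀).toReal + L * (b - b₀) := by
    rw [pathCost_eq_add_setLIntegral_Ioc hb₀ hb₀b, setLIntegral_congr_fun measurableSet_Ioc htail,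
      setLIntegral_const, Real.volume_Ioc, ENNReal.toReal_add (pathCost_ne_top hL) (by finiteness),
      ENNReal.toReal_mul, ENNReal.toReal_ofReal L.coe_nonneg,
      ENNReal.toReal_ofReal (sub_nonneg.2 hb₀b)]
  refine ⟨b₀, hb₀, ?_, ?_⟩
  · rcases hb₀S with h0 | ⟨-, hball⟩
    · rw [h0]
      exact le_max_right _ _
    · exact (mem_closedBall_zero_iff.1 hball).trans (le_max_left _ _)
  · have hf := (hLf.comp hγ).le_add_mul b₀ b
    rw [Real.dist_eq, abs_of_nonpos (sub_nonpos.2 hb₀b), mul_one] at hf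
    simp only [Function.comp_apply] at hf
    rw [hcost]
    linarith

lemma le_of_mem_pathValues (hLf : LipschitzWith L f) (hL : ∀ z, h z ≤ L)
    (hhR : ∀ z ∉ ball (0 : E) R, h z = L) {x : E} {v : ℝ} (hv : v ∈ pathValues h f x) :
    f 0 - L * max R ‖x‖ ≤ v := by
  obtain ⟨b, γ, hb, hγ, rfl, rfl⟩ := hv
  obtain ⟨b', -, hb', hle⟩ := exists_exit_time hLf hL hhR hγ hb
  have hf := hLf.le_add_mul 0 (γ b')
  rw [dist_zero_left] at hf
  linarith [mul_le_mul_of_nonneg_left hb' L.coe_nonneg, (pathCost h γ b').toReal_nonneg]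

lemma bddBelow_pathValues (hLf : LipschitzWith L f) (hL : ∀ z, h z ≤ L)
    (hhR : ∀ z ∉ ball (0 : E) R, h z = L) (x : E) : BddBelow (pathValues h f x) :=
  ⟨_, fun _ => le_of_mem_pathValues hLf hL hhR⟩

lemma pathInf_le (hLf : LipschitzWith L f) (hL : ∀ z, h z ≤ L)
    (hhR : ∀ z ∉ ball (0 : E) R, h z = L) (x : E) : pathInf h f x ≤ f x :=
  csInf_le (bddBelow_pathValues hLf hL hhR x) (self_mem_pathValues h f x)

lemma pathInf_mono {h₁ h₂ : E → ℝ} (hLf : LipschitzWith L f) (hL₁ : ∀ z, h₁ z ≤ L)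
    (hhR₁ : ∀ z ∉ ball (0 : E) R, h₁ z = L) (hL₂ : ∀ z, h₂ z ≤ L) (h₁₂ : ∀ z, h₁ z ≤ h₂ z)
    (x : E) : pathInf h₁ f x ≤ pathInf h₂ f x := by
  refine le_csInf ⟨f x, self_mem_pathValues h₂ f x⟩ ?_
  rintro _ ⟨b, γ, hb, hγ, rfl, rfl⟩
  have h₁ : pathInf h₁ f (γ 0) ≤ _ :=
    csInf_le (bddBelow_pathValues hLf hL₁ hhR₁ (γ 0)) ⟨b, γ, hb, hγ, rfl, rfl⟩
  linarith [ENNReal.toReal_mono (pathCost_ne_top hL₂) (pathCost_mono h₁₂ b (γ := γ))]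

lemma exists_mem_pathValues_length_le {h : E → ℝ} (hLf : LipschitzWith L f)
    (hL : ∀ z, h z ≤ L) (hhR : ∀ z ∉ ball (0 : E) R, h z = L) {c : ℝ} (hc : 0 < c)
    (hch : ∀ z, c ≤ h z) {x : E} {v : ℝ} (hv : v ∈ pathValues h f x) (hvx : v ≤ f x) :
    ∃ b γ, b ∈ Icc 0 (L * (‖x‖ + max R ‖x‖) / c) ∧ LipschitzWith 1 γ ∧ γ 0 = x ∧
      f (γ b) + (pathCost h γ b).toReal ≤ v := by
  obtain ⟨b, γ, hb, hγ, rfl, rfl⟩ := hv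
  obtain ⟨b', hb', hγb', hle⟩ := exists_exit_time hLf hL hhR hγ hb
  refine ⟨b', γ, ⟨hb', ?_⟩, hγ, rfl, hle⟩
  have hcost : c * b' ≤ (pathCost h γ b').toReal := by
    rw [← ENNReal.toReal_ofReal (mul_nonneg hc.le hb'), ENNReal.ofReal_mul hc.le]
    exact ENNReal.toReal_mono (pathCost_ne_top hL) (mul_le_pathCost hch)
  have hf : f (γ 0) ≤ f (γ b') + L * (‖γ 0‖ + max R ‖γ 0‖) :=
    (hLf.le_add_mul _ _).trans (by gcongr; exact (dist_le_norm_add_norm _ _).trans (by gcongr))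
  rw [le_div_iff₀ hc]
  linarith

end PathInf

lemma LipschitzWith.of_lipschitzOnWith_Iic_Ici {X : Type*} [PseudoMetricSpace X] {F : ℝ → X}
    {K : ℝ≥0} {s : ℝ} (h₁ : LipschitzOnWith K F (Iic s)) (h₂ : LipschitzOnWith K F (Ici s)) :
    LipschitzWith K F := by
  refine LipschitzWith.of_dist_le_mul fun t₁ t₂ => ?_
  wlog h12 : t₁ ≤ t₂ generalizing t₁ t₂
  · rw [dist_comm, dist_comm t₁]
    exact this t₂ t₁ (le_of_not_ge h12)
  rcases le_total t₂ s with h2 | h2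
  · exact h₁.dist_le_mul t₁ (h12.trans h2) t₂ h2
  rcases le_total s t₁ with h1 | h1
  · exact h₂.dist_le_mul t₁ h1 t₂ h2
  calc dist (F t₁) (F t₂) ≤ dist (F t₁) (F s) + dist (F s) (F t₂) := dist_triangle _ _ _
    _ ≤ K * dist t₁ s + K * dist s t₂ :=
        add_le_add (h₁.dist_le_mul t₁ h1 s self_mem_Iic) (h₂.dist_le_mul s self_mem_Ici t₂ h2)
    _ = K * dist t₁ t₂ := by
        simp only [Real.dist_eq]
        rw [abs_of_nonpos (by linarith), abs_of_nonpos (by linarith),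
          abs_of_nonpos (by linarith)]
        ring

lemma lipConstOn_le {X : Type*} [PseudoMetricSpace X] {F : X → ℝ} {s : Set X} {K : ℝ≥0}
    (hF : LipschitzOnWith K F s) : lipConstOn F s ≤ K :=
  iSup₂_le fun _ hx => iSup₂_le fun _ hy => ENNReal.div_le_of_le_mul (hF hx hy)

lemma asympLipConst_le_of_forall_lt {X : Type*} [PseudoMetricSpace X] {F : X → ℝ} {x : X}
    {a : ℝ≥0} (hF : ∀ M : ℝ≥0, a < M → ∃ r > 0, LipschitzOnWith M F (ball x r)) :
    asympLipConst F x ≤ a := by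
  refine ENNReal.le_of_forall_pos_le_add fun ε hε _ => ?_
  obtain ⟨r, hr, hFr⟩ := hF (a + ε) (lt_add_of_pos_right a hε)
  exact (iInf_le _ ⟨r, hr⟩).trans (by exact_mod_cast lipConstOn_le hFr)

section Prepend

variable {E : Type*} [NormedAddCommGroup E] [NormedSpace ℝ E]

def prependSegment (x : E) (γ : ℝ → E) (t : ℝ) : E :=
  if t ≤ dist x (γ 0) then x + (t / dist x (γ 0)) • (γ 0 - x) else γ (t - dist x (γ 0))

variable {x : E} {γ : ℝ → E}

lemma prependSegment_zero : prependSegment x γ 0 = x := by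
  simp [prependSegment]

lemma prependSegment_of_ge {t : ℝ} (ht : dist x (γ 0) ≤ t) :
    prependSegment x γ t = γ (t - dist x (γ 0)) := by
  rcases ht.lt_or_eq with ht | rfl
  · exact if_neg (not_le.2 ht)
  rw [prependSegment, if_pos le_rfl, sub_self]
  rcases eq_or_ne (dist x (γ 0)) 0 with hd | hd
  · rw [dist_eq_zero.1 hd]
    simp
  · rw [div_self hd, one_smul, add_sub_cancel]

lemma prependSegment_dist_add {t : ℝ} (ht : 0 ≤ t) :
    prependSegment x γ (dist x (γ 0) + t) = γ t := by
  rw [prependSegment_of_ge (le_add_of_nonneg_right ht), add_sub_cancel_left]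

lemma prependSegment_mem_segment {t : ℝ} (ht : t ∈ Icc 0 (dist x (γ 0))) :
    prependSegment x γ t ∈ segment ℝ x (γ 0) := by
  rw [prependSegment, if_pos ht.2, segment_eq_image']
  exact ⟨t / dist x (γ 0), ⟨div_nonneg ht.1 dist_nonneg, div_le_one_of_le₀ ht.2 dist_nonneg⟩, rfl⟩

lemma lipschitzWith_prependSegment (hγ : LipschitzWith 1 γ) :
    LipschitzWith 1 (prependSegment x γ) := by
  refine .of_lipschitzOnWith_Iic_Ici (s := dist x (γ 0))
    (.of_dist_le_mul fun t₁ h₁ t₂ h₂ => ?_) (.of_dist_le_mul fun t₁ h₁ t₂ h₂ => ?_)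
  · rw [prependSegment, prependSegment, if_pos (mem_Iic.1 h₁), if_pos (mem_Iic.1 h₂),
      dist_add_left, dist_eq_norm, ← sub_smul, norm_smul, ← dist_eq_norm (γ 0) x, dist_comm (γ 0),
      NNReal.coe_one, one_mul]
    rcases eq_or_ne (dist x (γ 0)) 0 with hd | hd
    · simp [hd]
    · rw [← _root_.sub_div, Real.norm_eq_abs, abs_div, abs_of_nonneg dist_nonneg,
        div_mul_cancel₀ _ hd, Real.dist_eq]
  · rw [prependSegment_of_ge h₁, prependSegment_of_ge h₂]
    simpa [dist_sub_right] using hγ.dist_le_mul (t₁ - dist x (γ 0)) (t₂ - dist x (γ 0))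

lemma pathCost_prependSegment_le {h : E → ℝ} {M : ℝ≥0} {b : ℝ} (hb : 0 ≤ b)
    (hM : ∀ z ∈ segment ℝ x (γ 0), h z ≤ M) :
    pathCost h (prependSegment x γ) (dist x (γ 0) + b) ≤
      ENNReal.ofReal (M * dist x (γ 0)) + pathCost h γ b := by
  set d := dist x (γ 0)
  rw [pathCost_eq_add_setLIntegral_Ioc dist_nonneg (le_add_of_nonneg_right hb),
    ENNReal.ofReal_mul M.coe_nonneg]
  gcongr
  · exact pathCost_le_mul fun t ht => hM _ (prependSegment_mem_segment ht)
  · calc ∫⁻ t in Ioc d (d + b), ENNReal.ofReal (h (prependSegment x γ t))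
        = ∫⁻ t in Ioc d (d + b), ENNReal.ofReal (h (γ (t - d))) :=
          setLIntegral_congr_fun measurableSet_Ioc fun t ht => by
            rw [prependSegment_of_ge ht.1.le]
      _ = ∫⁻ t in Ioc 0 b, ENNReal.ofReal (h (γ t)) := by
          have := (measurePreserving_sub_right volume d).setLIntegral_comp_preimage_emb
            (measurableEmbedding_subRight d) (fun t => ENNReal.ofReal (h (γ t))) (Ioc 0 b)
          rwa [preimage_sub_const_Ioc, zero_add, add_comm b] at this
      _ ≤ pathCost h γ b := lintegral_mono_set Ioc_subset_Icc_self

end Prepend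

section PathInfLipschitz

variable {E : Type*} [NormedAddCommGroup E] [NormedSpace ℝ E] {L : ℝ≥0} {R : ℝ} {f h : E → ℝ}

lemma pathInf_le_pathInf_add (hLf : LipschitzWith L f) (hL : ∀ z, h z ≤ L)
    (hhR : ∀ z ∉ ball (0 : E) R, h z = L) {x y : E} {M : ℝ≥0}
    (hM : ∀ z ∈ segment ℝ x y, h z ≤ M) :
    pathInf h f x ≤ pathInf h f y + M * dist x y := by
  rw [← sub_le_iff_le_add]
  refine le_csInf ⟨f y, self_mem_pathValues h f y⟩ ?_
  rintro _ ⟨b, γ, hb, hγ, rfl, rfl⟩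
  have hcost := ENNReal.toReal_mono
    (ENNReal.add_ne_top.2 ⟨ENNReal.ofReal_ne_top, pathCost_ne_top hL⟩)
    (pathCost_prependSegment_le hb hM)
  rw [ENNReal.toReal_add ENNReal.ofReal_ne_top (pathCost_ne_top hL),
    ENNReal.toReal_ofReal (by positivity)] at hcost
  have hx : pathInf h f x ≤ _ := csInf_le (bddBelow_pathValues hLf hL hhR x)
    ⟨dist x (γ 0) + b, prependSegment x γ, add_nonneg dist_nonneg hb,
      lipschitzWith_prependSegment hγ, prependSegment_zero, rfl⟩
  rw [prependSegment_dist_add hb] at hx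
  linarith

lemma lipschitzOnWith_pathInf (hLf : LipschitzWith L f) (hL : ∀ z, h z ≤ L)
    (hhR : ∀ z ∉ ball (0 : E) R, h z = L) {s : Set E} (hs : Convex ℝ s) {M : ℝ≥0}
    (hM : ∀ z ∈ s, h z ≤ M) : LipschitzOnWith M (pathInf h f) s :=
  .of_le_add_mul M fun _ hx _ hy =>
    pathInf_le_pathInf_add hLf hL hhR fun _ hz => hM _ (hs.segment_subset hx hy hz)

lemma lipschitzWith_pathInf (hLf : LipschitzWith L f) (hL : ∀ z, h z ≤ L)
    (hhR : ∀ z ∉ ball (0 : E) R, h z = L) : LipschitzWith L (pathInf h f) :=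
  lipschitzOnWith_univ.1 (lipschitzOnWith_pathInf hLf hL hhR convex_univ fun z _ => hL z)

lemma asympLipConst_pathInf_le (hLf : LipschitzWith L f) (hL : ∀ z, h z ≤ L)
    (hhR : ∀ z ∉ ball (0 : E) R, h z = L) (hh : Continuous h) (x : E) :
    asympLipConst (pathInf h f) x ≤ ENNReal.ofReal (h x) :=
  asympLipConst_le_of_forall_lt fun M hM => by
    have hxM : h x < M := (Real.le_coe_toNNReal (h x)).trans_lt (by exact_mod_cast hM)
    obtain ⟨r, hr, hball⟩ := Metric.mem_nhds_iff.1 (hh.continuousAt.eventually (gt_mem_nhds hxM))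
    exact ⟨r, hr, lipschitzOnWith_pathInf hLf hL hhR (convex_ball x r) fun z hz => (hball hz).le⟩

end PathInfLipschitz

lemma Monotone.apply_le_of_tendsto {X : Type*} {gi : ℕ → X → ℝ} {g : X → ℝ} (hmono : Monotone gi)
    (htend : ∀ x, Tendsto (fun i => gi i x) atTop (𝓝 (g x))) (i : ℕ) (x : X) : gi i x ≤ g x :=
  Monotone.ge_of_tendsto (fun _ _ hij => hmono hij x) (htend x) i

section Limits

variable {X : Type*} [TopologicalSpace X]

lemma pathCost_le_liminf {h : X → ℝ} (hh : Continuous h) {γ : ℕ → ℝ → X}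
    (hγ : ∀ k, Continuous (γ k)) {δ : ℝ → X} {b : ℕ → ℝ} {β : ℝ} (hb : Tendsto b atTop (𝓝 β))
    (hγδ : ∀ t ∈ Ico 0 β, Tendsto (fun k => γ k t) atTop (𝓝 (δ t))) :
    pathCost h δ β ≤ atTop.liminf fun k => pathCost h (γ k) (b k) := by
  let u k := (Icc 0 (b k)).indicator fun t => ENNReal.ofReal (h (γ k t))
  have hu : ∀ k, pathCost h (γ k) (b k) = ∫⁻ t, u k t := fun k =>
    (lintegral_indicator measurableSet_Icc _).symm
  calc pathCost h δ β = ∫⁻ t, (Ico 0 β).indicator (fun t => ENNReal.ofReal (h (δ t))) t := by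
        rw [lintegral_indicator measurableSet_Ico]
        exact setLIntegral_congr Ico_ae_eq_Icc.symm
    _ ≤ ∫⁻ t, atTop.liminf fun k => u k t := lintegral_mono fun t => by
        by_cases ht : t ∈ Ico 0 β
        · have hut : ∀ᶠ k in atTop, ENNReal.ofReal (h (γ k t)) =
              (Icc 0 (b k)).indicator (fun t => ENNReal.ofReal (h (γ k t))) t :=
            (hb.eventually (eventually_gt_nhds ht.2)).mono fun k hk =>
              (Set.indicator_of_mem (show t ∈ Icc 0 (b k) from ⟨ht.1, hk.le⟩)
                (fun t => ENNReal.ofReal (h (γ k t)))).symm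
          rw [indicator_of_mem ht]
          exact (((ENNReal.continuous_ofReal.tendsto _).comp
            ((hh.tendsto _).comp (hγδ t ht))).congr' hut).liminf_eq.ge
        · rw [indicator_of_notMem ht]
          exact zero_le
    _ ≤ atTop.liminf fun k => ∫⁻ t, u k t := lintegral_liminf_le fun k =>
        (ENNReal.measurable_ofReal.comp (hh.comp (hγ k)).measurable).indicator measurableSet_Icc
    _ = atTop.liminf fun k => pathCost h (γ k) (b k) := by simp only [hu]

lemma pathCost_eq_iSup {g : X → ℝ} {gi : ℕ → X → ℝ} (hgiC : ∀ i, Continuous (gi i))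
    (hmono : Monotone gi) (htend : ∀ x, Tendsto (fun i => gi i x) atTop (𝓝 (g x)))
    {γ : ℝ → X} (hγ : Continuous γ) (b : ℝ) :
    pathCost g γ b = ⨆ i, pathCost (gi i) γ b := by
  have hmono' : Monotone fun i t => ENNReal.ofReal (gi i (γ t)) := fun i j hij t =>
    ENNReal.ofReal_le_ofReal (hmono hij _)
  simp only [pathCost]
  rw [← lintegral_iSup (f := fun i t => ENNReal.ofReal (gi i (γ t)))
    (fun i => ENNReal.measurable_ofReal.comp ((hgiC i).comp hγ).measurable) hmono']
  refine lintegral_congr fun t => tendsto_nhds_unique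
    ((ENNReal.continuous_ofReal.tendsto _).comp (htend _)) ?_
  exact tendsto_atTop_iSup fun i j hij => hmono' hij t

lemma IsCompact.exists_pos_le_of_monotone {K : Set X} (hK : IsCompact K) {gi : ℕ → X → ℝ}
    (hgiC : ∀ i, Continuous (gi i)) (hmono : Monotone gi) (hpos : ∀ x ∈ K, ∃ i, 0 < gi i x) :
    ∃ i₀, ∃ c > 0, ∀ x ∈ K, c ≤ gi i₀ x := by
  obtain ⟨i₀, hi₀⟩ := hK.elim_directed_cover (fun i => {x | 0 < gi i x})
    (fun i => isOpen_lt continuous_const (hgiC i)) (fun x hx => mem_iUnion.2 (hpos x hx))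
    (Monotone.directed_le fun i j hij x (hx : 0 < gi i x) => hx.trans_le (hmono hij x))
  obtain ⟨c, hc, hcK⟩ := hK.exists_forall_le' (hgiC i₀).continuousOn hi₀
  exact ⟨i₀, c, hc, hcK⟩

end Limits

section Compactness

variable {X : Type*} [MetricSpace X]

lemma exists_subseq_tendsto_of_lipschitzWith [ProperSpace X] {K : ℝ≥0} {T : ℝ} (hT : 0 ≤ T)
    {x : X} {γ : ℕ → ℝ → X} (hγ : ∀ k, LipschitzWith K (γ k)) (hγ0 : ∀ k, γ k 0 = x) :
    ∃ φ : ℕ → ℕ, StrictMono φ ∧ ∃ δ : ℝ → X, LipschitzWith K δ ∧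
      ∀ t ∈ Icc 0 T, Tendsto (fun k => γ (φ k) t) atTop (𝓝 (δ t)) := by
  have : CompactSpace (Icc 0 T) := isCompact_iff_compactSpace.1 isCompact_Icc
  let F : ℕ → BoundedContinuousFunction (Icc 0 T) X := fun k =>
    .mkOfCompact ⟨fun t => γ k t, (hγ k).continuous.comp continuous_subtype_val⟩
  let A : Set (BoundedContinuousFunction (Icc 0 T) X) :=
    {G | LipschitzWith K G ∧ ∀ t, G t ∈ closedBall x (K * T)}
  have hFA : ∀ k, F k ∈ A := fun k => by
    refine ⟨.of_dist_le_mul fun s t => (hγ k).dist_le_mul s t, fun t => ?_⟩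
    rw [mem_closedBall, ← hγ0 k]
    calc dist (γ k t) (γ k 0) ≤ K * dist (t : ℝ) 0 := (hγ k).dist_le_mul _ _
      _ ≤ K * T := by
          rw [Real.dist_eq, sub_zero, abs_of_nonneg t.2.1]
          exact mul_le_mul_of_nonneg_left t.2.2 K.coe_nonneg
  have hA : IsCompact (closure A) :=
    BoundedContinuousFunction.arzela_ascoli _ (isCompact_closedBall x _) A (fun G t hG => hG.2 t)
      (Metric.equicontinuous_of_continuity_modulus (fun r => K * r)
        (by simpa using (tendsto_id (x := 𝓝 (0 : ℝ))).const_mul (K : ℝ)) _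
        fun s t G => G.2.1.dist_le_mul s t)
  obtain ⟨G, -, φ, hφ, hG⟩ := hA.tendsto_subseq fun k => subset_closure (hFA k)
  have hpt : ∀ t, Tendsto (fun k => F (φ k) t) atTop (𝓝 (G t)) := fun t =>
    (BoundedContinuousFunction.tendsto_iff_tendstoUniformly.1 hG).tendsto_at t
  have hGlip : LipschitzWith K G := .of_dist_le_mul fun s t =>
    le_of_tendsto ((hpt s).dist (hpt t)) (.of_forall fun k => (hFA (φ k)).1.dist_le_mul s t)
  refine ⟨φ, hφ, G ∘ projIcc 0 T hT, ?_, fun t ht => ?_⟩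
  · simpa only [mul_one] using hGlip.comp (LipschitzWith.projIcc hT)
  · simp only [Function.comp_apply, projIcc_of_mem hT ht]
    exact hpt ⟨t, ht⟩

lemma tendsto_apply_of_lipschitzWith {ι : Type*} {l : Filter ι} {K : ℝ≥0} {γ : ι → ℝ → X}
    (hγ : ∀ k, LipschitzWith K (γ k)) {b : ι → ℝ} {β : ℝ} {y : X} (hb : Tendsto b l (𝓝 β))
    (hγβ : Tendsto (fun k => γ k β) l (𝓝 y)) : Tendsto (fun k => γ k (b k)) l (𝓝 y) := by
  rw [tendsto_iff_dist_tendsto_zero] at hb hγβ ⊢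
  refine squeeze_zero (fun k => dist_nonneg) (fun k => (dist_triangle _ (γ k β) _).trans
    (add_le_add_left ((hγ k).dist_le_mul _ _) _)) ?_
  simpa using (hb.const_mul (K : ℝ)).add hγβ

lemma IsUpperGradient.le_of_mem_pathValues {f g : X → ℝ} (hgug : IsUpperGradient g f) {M : ℝ}
    (hgM : ∀ z, g z ≤ M) {x : X} {v : ℝ} (hv : v ∈ pathValues g f x) : f x ≤ v := by
  obtain ⟨b, γ, hb, hγ, rfl, rfl⟩ := hv
  have := (ENNReal.ofReal_le_iff_le_toReal (pathCost_ne_top hgM)).1 (hgug b hb γ hγ)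
  linarith [neg_abs_le (f (γ b) - f (γ 0))]

lemma exists_mem_pathValues_le [ProperSpace X] {f g : X → ℝ} (hf : Continuous f) {M : ℝ}
    (hgM : ∀ z, g z ≤ M) {gi : ℕ → X → ℝ} (hgiC : ∀ i, Continuous (gi i)) (hgi_mono : Monotone gi)
    (hgi_tendsto : ∀ x, Tendsto (fun i => gi i x) atTop (𝓝 (g x))) {x : X} {T a : ℝ}
    {b : ℕ → ℝ} {γ : ℕ → ℝ → X} (hbT : ∀ k, b k ∈ Icc 0 T) (hγ : ∀ k, LipschitzWith 1 (γ k))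
    (hγ0 : ∀ k, γ k 0 = x) (hval : ∀ k, f (γ k (b k)) + (pathCost (gi k) (γ k) (b k)).toReal ≤ a) :
    ∃ v ∈ pathValues g f x, v ≤ a := by
  have hgiM i z : gi i z ≤ M := (hgi_mono.apply_le_of_tendsto hgi_tendsto i z).trans (hgM z)
  have hT : 0 ≤ T := (hbT 0).1.trans (hbT 0).2
  obtain ⟨φ, hφ, δ, hδ, hγδ⟩ := exists_subseq_tendsto_of_lipschitzWith hT hγ hγ0
  obtain ⟨β, hβT, ψ, hψ, hbβ⟩ := isCompact_Icc.tendsto_subseq fun k => hbT (φ k)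
  set σ := φ ∘ ψ
  have hγδσ : ∀ t ∈ Icc 0 T, Tendsto (fun k => γ (σ k) t) atTop (𝓝 (δ t)) := fun t ht =>
    (hγδ t ht).comp hψ.tendsto_atTop
  have hδ0 : δ 0 = x :=
    tendsto_nhds_unique (hγδσ 0 ⟨le_rfl, hT⟩) (by simp only [hγ0, tendsto_const_nhds])
  have hend : Tendsto (fun k => f (γ (σ k) (b (σ k)))) atTop (𝓝 (f (δ β))) :=
    (hf.tendsto _).comp (tendsto_apply_of_lipschitzWith (fun k => hγ (σ k)) hbβ (hγδσ β hβT))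
  have hgap k : 0 ≤ a - f (γ (σ k) (b (σ k))) := by
    linarith [hval (σ k), (pathCost (gi (σ k)) (γ (σ k)) (b (σ k))).toReal_nonneg]
  have hcost j : pathCost (gi j) δ β ≤ ENNReal.ofReal (a - f (δ β)) :=
    calc pathCost (gi j) δ β ≤ atTop.liminf fun k => pathCost (gi j) (γ (σ k)) (b (σ k)) :=
          pathCost_le_liminf (hgiC j) (fun k => (hγ _).continuous) hbβ fun t ht =>
            hγδσ t ⟨ht.1, ht.2.le.trans hβT.2⟩
      _ ≤ atTop.liminf fun k => ENNReal.ofReal (a - f (γ (σ k) (b (σ k)))) := by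
          refine liminf_le_liminf ((eventually_ge_atTop j).mono fun k hk => ?_)
          refine (pathCost_mono (hgi_mono (hk.trans ((hφ.comp hψ).id_le k))) _).trans ?_
          rw [ENNReal.le_ofReal_iff_toReal_le (pathCost_ne_top (hgiM _)) (hgap k)]
          linarith [hval (σ k)]
      _ = ENNReal.ofReal (a - f (δ β)) :=
          ((ENNReal.continuous_ofReal.tendsto _).comp (tendsto_const_nhds.sub hend)).liminf_eq
  have hgδ := ENNReal.toReal_le_of_le_ofReal
    (sub_nonneg.2 (le_of_tendsto hend (.of_forall fun k => by linarith [hgap k])))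
    ((pathCost_eq_iSup hgiC hgi_mono hgi_tendsto hδ.continuous β).trans_le (iSup_le hcost))
  exact ⟨_, ⟨β, δ, hβT.1, hδ, hδ0, rfl⟩, by linarith⟩

end Compactness

section Convergence

variable {E : Type*} [NormedAddCommGroup E] {L : ℝ≥0} {R : ℝ} {f : E → ℝ}

lemma exists_pos_le_of_tendsto [ProperSpace E] {g : E → ℝ} (hgpos : ∀ x, 0 < g x)
    (hgle : ∀ x, g x ≤ L) {gi : ℕ → E → ℝ} (hgiC : ∀ i, Continuous (gi i))
    (hgi_mono : Monotone gi) (hgi_tendsto : ∀ x, Tendsto (fun i => gi i x) atTop (𝓝 (g x)))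
    (hgiR : ∀ i, ∀ x ∉ ball (0 : E) R, gi i x = L) :
    ∃ i₀, ∃ c > 0, ∀ i ≥ i₀, ∀ z, c ≤ gi i z := by
  obtain ⟨i₀, c, hc, hcK⟩ := (isCompact_closedBall (0 : E) R).exists_pos_le_of_monotone hgiC
    hgi_mono fun z _ => ((hgi_tendsto z).eventually (eventually_gt_nhds (hgpos z))).exists
  refine ⟨i₀, min c L, lt_min hc ((hgpos 0).trans_le (hgle 0)), fun i hi z => ?_⟩
  by_cases hz : z ∈ closedBall (0 : E) R
  · exact (min_le_left _ _).trans ((hcK z hz).trans (hgi_mono hi z))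
  · rw [hgiR i z fun hb => hz (ball_subset_closedBall hb)]
    exact min_le_right _ _

lemma exists_le_pathInf [ProperSpace E] {g : E → ℝ} (hLf : LipschitzWith L f)
    (hgpos : ∀ x, 0 < g x) (hgle : ∀ x, g x ≤ L) (hgug : IsUpperGradient g f)
    {gi : ℕ → E → ℝ} (hgiC : ∀ i, Continuous (gi i)) (hgi_mono : Monotone gi)
    (hgi_tendsto : ∀ x, Tendsto (fun i => gi i x) atTop (𝓝 (g x)))
    (hgiR : ∀ i, ∀ x ∉ ball (0 : E) R, gi i x = L) (x : E) {ε : ℝ} (hε : 0 < ε) :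
    ∃ i, f x - ε ≤ pathInf (gi i) f x := by
  by_contra! hlt
  have hgiL i z : gi i z ≤ L := (hgi_mono.apply_le_of_tendsto hgi_tendsto i z).trans (hgle z)
  obtain ⟨i₀, c, hc, hfloor⟩ := exists_pos_le_of_tendsto hgpos hgle hgiC hgi_mono hgi_tendsto hgiR
  have hsel : ∀ k, ∃ b γ, b ∈ Icc 0 (L * (‖x‖ + max R ‖x‖) / c) ∧ LipschitzWith 1 γ ∧
      γ 0 = x ∧ f (γ b) + (pathCost (gi (k + i₀)) γ b).toReal ≤ f x - ε := fun k => by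
    obtain ⟨v, hv, hvlt⟩ := exists_lt_of_csInf_lt ⟨f x, self_mem_pathValues _ f x⟩ (hlt (k + i₀))
    obtain ⟨b, γ, hbT, hγ, hγ0, hle⟩ := exists_mem_pathValues_length_le hLf (hgiL _) (hgiR _) hc
      (hfloor _ (Nat.le_add_left _ _)) hv (by linarith)
    exact ⟨b, γ, hbT, hγ, hγ0, by linarith⟩
  choose b γ hbT hγ hγ0 hval using hsel
  obtain ⟨v, hv, hvx⟩ := exists_mem_pathValues_le hLf.continuous hgle (fun k => hgiC (k + i₀))
    (fun j k hjk => hgi_mono (Nat.add_le_add_right hjk i₀))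
    (fun z => (tendsto_add_atTop_iff_nat i₀).2 (hgi_tendsto z)) hbT hγ hγ0 hval
  linarith [hgug.le_of_mem_pathValues hgle hv]

lemma tendsto_pathInf [ProperSpace E] {g : E → ℝ} (hLf : LipschitzWith L f)
    (hgpos : ∀ x, 0 < g x) (hgle : ∀ x, g x ≤ L) (hgug : IsUpperGradient g f)
    {gi : ℕ → E → ℝ} (hgiC : ∀ i, Continuous (gi i)) (hgi_mono : Monotone gi)
    (hgi_tendsto : ∀ x, Tendsto (fun i => gi i x) atTop (𝓝 (g x)))
    (hgiR : ∀ i, ∀ x ∉ ball (0 : E) R, gi i x = L) (x : E) :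
    Tendsto (fun i => pathInf (gi i) f x) atTop (𝓝 (f x)) := by
  have hgiL i z : gi i z ≤ L := (hgi_mono.apply_le_of_tendsto hgi_tendsto i z).trans (hgle z)
  refine tendsto_order.2 ⟨fun a ha => ?_, fun a ha =>
    .of_forall fun i => (pathInf_le hLf (hgiL i) (hgiR i) x).trans_lt ha⟩
  obtain ⟨N, hN⟩ := exists_le_pathInf hLf hgpos hgle hgug hgiC hgi_mono hgi_tendsto hgiR x
    (half_pos (sub_pos.2 ha))
  filter_upwards [eventually_ge_atTop N] with i hi
  have := pathInf_mono hLf (hgiL N) (hgiR N) (hgiL i) (hgi_mono hi) x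
  linarith

end Convergence

theorem weak_star_approximation_general
    {n : ℕ} (f : EuclideanSpace ℝ (Fin n) → ℝ) (L : ℝ≥0)
    (hLf : LipschitzWith L f)
    (g : EuclideanSpace ℝ (Fin n) → ℝ)
    (hgpos : ∀ x, 0 < g x) (hgle : ∀ x, g x ≤ (L : ℝ))
    (hgug : IsUpperGradient g f)
    (R : ℝ)
    (gi : ℕ → EuclideanSpace ℝ (Fin n) → ℝ)
    (hgiC : ∀ i, Continuous (gi i)) (hgi_mono : Monotone gi)
    (hgi_tendsto : ∀ x, Tendsto (fun i => gi i x) atTop (𝓝 (g x)))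
    (hgiR : ∀ i, ∀ x ∉ Metric.ball (0 : EuclideanSpace ℝ (Fin n)) R, gi i x = L) :
    ∃ fi : ℕ → EuclideanSpace ℝ (Fin n) → ℝ,
      (∀ i, LipschitzWith L (fi i)) ∧
      (∀ x, Tendsto (fun i => fi i x) atTop (𝓝 (f x))) ∧
      (∀ i x, asympLipConst (fi i) x ≤ ENNReal.ofReal (gi i x)) := by
  have hgiL i z : gi i z ≤ L := (hgi_mono.apply_le_of_tendsto hgi_tendsto i z).trans (hgle z)
  exact ⟨fun i => pathInf (gi i) f, fun i => lipschitzWith_pathInf hLf (hgiL i) (hgiR i),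
    tendsto_pathInf hLf hgpos hgle hgug hgiC hgi_mono hgi_tendsto hgiR,
    fun i => asympLipConst_pathInf_le hLf (hgiL i) (hgiR i) (hgiC i)⟩

/-- **Weak-* approximation of Lipschitz functions with prescribed asymptotic Lipschitz
constants** (Proposition 3.7): let `f : ℝⁿ → ℝ` be Lipschitz with (smallest) Lipschitz
constant `L > 0`, let `g` be a strictly positive lower semicontinuous upper gradient of `f`
bounded by `L` and equal to `L` outside a ball `B(0,R)`, and let `(g_i)` be a nondecreasing
sequence of continuous functions converging pointwise to `g` and equal to `L` outside
`B(0,R)`. Then there is a sequence `(f_i)` of `L`-Lipschitz functions converging pointwise to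
`f` with `Lip_a[f_i] ≤ g_i` everywhere. -/
theorem weak_star_approximation
    {n : ℕ} (f : EuclideanSpace ℝ (Fin n) → ℝ) (L : ℝ≥0)
    (hLf : LipschitzWith L f) (hLmin : ∀ L' : ℝ≥0, LipschitzWith L' f → L ≤ L')
    (hLpos : 0 < L)
    (g : EuclideanSpace ℝ (Fin n) → ℝ)
    (hgpos : ∀ x, 0 < g x) (hgle : ∀ x, g x ≤ (L : ℝ))
    (hglsc : LowerSemicontinuous g) (hgug : IsUpperGradient g f)
    (R : ℝ) (hR : 0 < R) (hgR : ∀ x ∉ Metric.ball (0 : EuclideanSpace ℝ (Fin n)) R, g x = L)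
    (gi : ℕ → EuclideanSpace ℝ (Fin n) → ℝ)
    (hgiC : ∀ i, Continuous (gi i)) (hgi_mono : Monotone gi)
    (hgi_tendsto : ∀ x, Tendsto (fun i => gi i x) atTop (𝓝 (g x)))
    (hgiR : ∀ i, ∀ x ∉ Metric.ball (0 : EuclideanSpace ℝ (Fin n)) R, gi i x = L) :
    ∃ fi : ℕ → EuclideanSpace ℝ (Fin n) → ℝ,
      (∀ i, LipschitzWith L (fi i)) ∧
      (∀ x, Tendsto (fun i => fi i x) atTop (𝓝 (f x))) ∧
      (∀ i x, asympLipConst (fi i) x ≤ ENNReal.ofReal (gi i x)) :=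
  weak_star_approximation_general f L hLf g hgpos hgle hgug R gi hgiC hgi_mono hgi_tendsto hgiR

end
end
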